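/- arXiv:2006.02030 — 7 statements merged into one kernel-verified Lean document; each statement's English description precedes it below -/
import Mathlib

section
/- Let u be a convex continuous function on an open convex set Ω ⊆ ℝⁿ and let ū be its π/4-rotated potential on the open set Ω̄ = ∂ũ(Ω). Then ū is differentiable at every point of Ω̄, its gradient Dū is locally Lipschitz with Lipschitz constant 1, and on every open convex subset V ⊆ Ω̄ both functions x̄ ↦ ū(x̄) + ½|x̄|² and x̄ ↦ ½|x̄|² − ū(x̄) are convex (i.e. −Iₙ ≤ D²ū ≤ Iₙ in the a.e. sense). -/
open Set Metric MeasureTheory Filter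
open scoped Topology NNReal RealInnerProductSpace

noncomputable section

abbrev Euc (n : ℕ) := EuclideanSpace ℝ (Fin n)

/-- `F(A) = ∑ arctan λᵢ(A)` for a symmetric matrix `A` (junk value `0` otherwise). -/
noncomputable def lagrangianAngle (n : ℕ) (A : Matrix (Fin n) (Fin n) ℝ) : ℝ :=
  if hA : A.IsHermitian then ∑ i, Real.arctan (hA.eigenvalues i) else 0

/-- The Hessian matrix `D²u(x)` of `u` at `x`. -/
noncomputable def hessian (n : ℕ) (u : Euc n → ℝ) (x : Euc n) : Matrix (Fin n) (Fin n) ℝ :=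
  Matrix.of fun i j =>
    fderiv ℝ (fun y => fderiv ℝ u y (EuclideanSpace.single i 1)) x (EuclideanSpace.single j 1)

def ViscositySubsolution (n : ℕ) (Ω : Set (Euc n)) (u ψ : Euc n → ℝ) : Prop :=
  ∀ φ : Euc n → ℝ, ContDiff ℝ 2 φ → ∀ x₀ ∈ Ω,
    IsLocalMaxOn (fun x => u x - φ x) Ω x₀ → ψ x₀ ≤ lagrangianAngle n (hessian n φ x₀)

def ViscositySupersolution (n : ℕ) (Ω : Set (Euc n)) (u ψ : Euc n → ℝ) : Prop :=
  ∀ φ : Euc n → ℝ, ContDiff ℝ 2 φ → ∀ x₀ ∈ Ω,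
    IsLocalMinOn (fun x => u x - φ x) Ω x₀ → lagrangianAngle n (hessian n φ x₀) ≤ ψ x₀

def ViscositySolution (n : ℕ) (Ω : Set (Euc n)) (u ψ : Euc n → ℝ) : Prop :=
  ViscositySubsolution n Ω u ψ ∧ ViscositySupersolution n Ω u ψ

/-- `u ∈ C^{k,α}(Ω)`: `u` is `k` times continuously differentiable on `Ω` and `D^k u`
is locally `α`-Hölder continuous on `Ω`. -/
def IsCkHolderOn (n k : ℕ) (α : ℝ) (u : Euc n → ℝ) (Ω : Set (Euc n)) : Prop :=
  ContDiffOn ℝ k u Ω ∧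
  ∀ x ∈ Ω, ∃ U ∈ 𝓝[Ω] x, ∃ C : ℝ≥0,
    HolderOnWith C α.toNNReal (iteratedFDerivWithin ℝ k u Ω) U

/-- The subdifferential of `w` at `x`, relative to the domain `Ω`. -/
def subdiff (n : ℕ) (Ω : Set (Euc n)) (w : Euc n → ℝ) (x : Euc n) : Set (Euc n) :=
  {p | ∀ y ∈ Ω, w x + ⟪p, y - x⟫ ≤ w y}

/-- `∂w(Ω) = ⋃_{x ∈ Ω} ∂w(x)`. -/
def subdiffImage (n : ℕ) (Ω : Set (Euc n)) (w : Euc n → ℝ) : Set (Euc n) :=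
  ⋃ x ∈ Ω, subdiff n Ω w x

/-- `ũ(x) = s·u(x) + (c/2)|x|²` with `c = s = 1/√2`. -/
noncomputable def tildePot (n : ℕ) (u : Euc n → ℝ) : Euc n → ℝ :=
  fun x => (Real.sqrt 2)⁻¹ * u x + (2 * Real.sqrt 2)⁻¹ * ‖x‖ ^ 2

/-- The Legendre transform `f*(p) = sup_{x ∈ Ω} (⟨x, p⟩ − f(x))`. -/
noncomputable def legendreTransform (n : ℕ) (Ω : Set (Euc n)) (f : Euc n → ℝ) (p : Euc n) : ℝ :=
  sSup ((fun x => ⟪x, p⟫ - f x) '' Ω)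

/-- The π/4-rotated potential `ū`, defined by `s·ū(p) − (c/2)|p|² = −ũ*(p)`. -/
noncomputable def rotPotential (n : ℕ) (Ω : Set (Euc n)) (u : Euc n → ℝ) : Euc n → ℝ :=
  fun p => Real.sqrt 2 *
    ((2 * Real.sqrt 2)⁻¹ * ‖p‖ ^ 2 - legendreTransform n Ω (tildePot n u) p)

/-- The VMO modulus `ω(r)` of `v` on `Ω`. -/
noncomputable def vmoModulus (n : ℕ) (Ω : Set (Euc n)) (v : Euc n → ℝ) (r : ℝ) : ℝ :=
  ⨆ x₀ ∈ Ω, ⨆ ρ ∈ Set.Ioc (0:ℝ) r,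
    ⨍ x in Metric.ball x₀ ρ ∩ Ω, |v x - ⨍ y in Metric.ball x₀ ρ ∩ Ω, v y|

/-- `v ∈ VMO(Ω)`: the VMO modulus tends to `0` as `r → 0⁺`. -/
def IsVMO (n : ℕ) (Ω : Set (Euc n)) (v : Euc n → ℝ) : Prop :=
  Tendsto (vmoModulus n Ω v) (𝓝[>] (0:ℝ)) (𝓝 0)

end

/-!
Since `u` is convex, `ũ` is `(1/√2)`-strongly convex on `Ω`. Hence, if `p ∈ ∂ũ(x)`, the Legendre
transform is squeezed for every `q` between the affine function `q ↦ ⟨x, q⟩ - ũ(x)` and that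
function plus `|q - p|² / √2`. Through `ū(q) = |q|²/2 - √2 ũ*(q)` this says that `ū` deviates from
its first-order expansion at `p` with slope `p - √2 x` by at most `|q - p|² / 2`, which gives the
differentiability of `ū` and the convexity of `|q|²/2 ± ū`. The gradient is `1`-Lipschitz because
`∂ũ` is strongly monotone: `⟨p - p', x - x'⟩ ≥ |x - x'|² / √2`.
-/

lemma le_of_forall_Ioc_le_add_mul {a b c : ℝ} (h : ∀ t ∈ Ioc (0 : ℝ) 1, a ≤ b + t * c) :
    a ≤ b := by
  have hlim : Tendsto (fun t : ℝ => b + t * c) (𝓝[>] 0) (𝓝 b) :=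
    ((by fun_prop : Continuous fun t : ℝ => b + t * c).tendsto' 0 b (by simp)).mono_left
      nhdsWithin_le_nhds
  exact ge_of_tendsto hlim (eventually_of_mem (Ioc_mem_nhdsGT one_pos) h)

lemma convexOn_of_forall_exists_le_add {E : Type*} [AddCommGroup E] [Module ℝ E] {s : Set E}
    (hs : Convex ℝ s) {f : E → ℝ}
    (h : ∀ x ∈ s, ∃ g : E →ₗ[ℝ] ℝ, ∀ y ∈ s, f x + g (y - x) ≤ f y) : ConvexOn ℝ s f := by
  refine ⟨hs, fun x hx y hy a b ha hb hab => ?_⟩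
  obtain ⟨g, hg⟩ := h _ (hs hx hy ha hb hab)
  have hbal : a • (x - (a • x + b • y)) + b • (y - (a • x + b • y)) = 0 := by
    rw [← sub_eq_of_eq_add' hab.symm]; module
  have hg0 := congrArg g hbal
  have hfz : f (a • x + b • y) = a * f (a • x + b • y) + b * f (a • x + b • y) := by
    rw [← add_mul, hab, one_mul]
  simp only [map_add, map_smul, map_zero, smul_eq_mul] at hg0 ⊢
  linarith [mul_le_mul_of_nonneg_left (hg x hx) ha, mul_le_mul_of_nonneg_left (hg y hy) hb]

lemma hasFDerivAt_of_norm_sub_le_sq {𝕜 E F : Type*} [NontriviallyNormedField 𝕜]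
    [NormedAddCommGroup E] [NormedSpace 𝕜 E] [NormedAddCommGroup F] [NormedSpace 𝕜 F]
    {f : E → F} {f' : E →L[𝕜] F} {x : E} (C : ℝ)
    (h : ∀ y, ‖f y - f x - f' (y - x)‖ ≤ C * ‖y - x‖ ^ 2) : HasFDerivAt f f' x := by
  rw [hasFDerivAt_iff_isLittleO]
  refine (Asymptotics.IsBigO.of_bound C (Eventually.of_forall fun y => ?_)).trans_isLittleO
    (Asymptotics.isLittleO_pow_sub_sub x one_lt_two)
  simpa using h y

section InnerProductSpace

variable {E : Type*} [NormedAddCommGroup E] [InnerProductSpace ℝ E]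

lemma StrongConvexOn.add_inner_add_sq_le {s : Set E} {m : ℝ} {f : E → ℝ}
    (hf : StrongConvexOn s m f) {x y p : E} (hx : x ∈ s) (hy : y ∈ s)
    (hp : ∀ z ∈ s, f x + ⟪p, z - x⟫ ≤ f z) :
    f x + ⟪p, y - x⟫ + m / 2 * ‖y - x‖ ^ 2 ≤ f y := by
  refine le_of_forall_Ioc_le_add_mul (c := m / 2 * ‖y - x‖ ^ 2) fun t ⟨ht0, ht1⟩ => ?_
  have hsub := hp _ (hf.1 hx hy (sub_nonneg.2 ht1) ht0.le (sub_add_cancel 1 t))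
  have hconv := hf.2 hx hy (sub_nonneg.2 ht1) ht0.le (sub_add_cancel 1 t)
  rw [show (1 - t) • x + t • y - x = t • (y - x) by module, real_inner_smul_right] at hsub
  rw [norm_sub_rev, smul_eq_mul, smul_eq_mul] at hconv
  refine le_of_mul_le_mul_left ?_ ht0
  linear_combination hsub + hconv

lemma StrongConvexOn.mul_sq_norm_sub_le_inner {s : Set E} {m : ℝ} {f : E → ℝ}
    (hf : StrongConvexOn s m f) {x y p q : E} (hx : x ∈ s) (hy : y ∈ s)
    (hp : ∀ z ∈ s, f x + ⟪p, z - x⟫ ≤ f z) (hq : ∀ z ∈ s, f y + ⟪q, z - y⟫ ≤ f z) :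
    m * ‖x - y‖ ^ 2 ≤ ⟪p - q, x - y⟫ := by
  have hxy := hf.add_inner_add_sq_le hx hy hp
  have hyx := hf.add_inner_add_sq_le hy hx hq
  rw [norm_sub_rev, ← neg_sub x y, inner_neg_right] at hxy
  rw [inner_sub_left]
  linarith

lemma inner_sub_le_of_strong_subgradient {s : Set E} {m : ℝ} {f : E → ℝ} (hm : 0 < m)
    {x p : E} (hp : ∀ y ∈ s, f x + ⟪p, y - x⟫ + m / 2 * ‖y - x‖ ^ 2 ≤ f y) (q : E)
    {y : E} (hy : y ∈ s) :
    ⟪y, q⟫ - f y ≤ ⟪x, q⟫ - f x + ‖q - p‖ ^ 2 / (2 * m) := by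
  have hyoung : ⟪y - x, q - p⟫ ≤ m / 2 * ‖y - x‖ ^ 2 + ‖q - p‖ ^ 2 / (2 * m) := by
    have hsq : 0 ≤ (m * ‖y - x‖ - ‖q - p‖) ^ 2 / (2 * m) := by positivity
    have hexp : (m * ‖y - x‖ - ‖q - p‖) ^ 2 / (2 * m)
        = m / 2 * ‖y - x‖ ^ 2 + ‖q - p‖ ^ 2 / (2 * m) - ‖y - x‖ * ‖q - p‖ := by
      field_simp; ring
    linarith [real_inner_le_norm (y - x) (q - p)]
  have hpy := hp y hy
  have hsplit : ⟪y, q⟫ = ⟪x, q⟫ + ⟪y - x, q - p⟫ + ⟪p, y - x⟫ := by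
    rw [inner_sub_right, real_inner_comm p]; simp only [inner_sub_left]; ring
  linarith

lemma convexOn_half_sq_norm_add_and_sub {s : Set E} (hs : Convex ℝ s) {f : E → ℝ}
    (h : ∀ p ∈ s, ∃ g : E, ∀ q ∈ s, |f q - f p - ⟪g, q - p⟫| ≤ ‖q - p‖ ^ 2 / 2) :
    ConvexOn ℝ s (fun p => f p + ‖p‖ ^ 2 / 2) ∧ ConvexOn ℝ s (fun p => ‖p‖ ^ 2 / 2 - f p) := by
  have hsq (p q : E) : ‖q‖ ^ 2 / 2 = ‖p‖ ^ 2 / 2 + ⟪p, q - p⟫ + ‖q - p‖ ^ 2 / 2 := by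
    rw [show q = p + (q - p) by abel, norm_add_sq_real]; simp only [add_sub_cancel_left]; ring
  constructor <;> refine convexOn_of_forall_exists_le_add hs fun p hp => ?_
  · obtain ⟨g, hg⟩ := h p hp
    refine ⟨innerₛₗ ℝ (g + p), fun q hq => ?_⟩
    have hlower := (abs_le.1 (hg q hq)).1
    simp only [innerₛₗ_apply_apply, inner_add_left]
    linarith [hsq p q]
  · obtain ⟨g, hg⟩ := h p hp
    refine ⟨innerₛₗ ℝ (p - g), fun q hq => ?_⟩
    have hupper := (abs_le.1 (hg q hq)).2
    simp only [innerₛₗ_apply_apply, inner_sub_left]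
    linarith [hsq p q]

lemma norm_sub_smul_le_norm {a b : E} {k : ℝ} (hk : 0 ≤ k) (h : k * ‖b‖ ^ 2 ≤ 2 * ⟪a, b⟫) :
    ‖a - k • b‖ ≤ ‖a‖ := by
  refine (sq_le_sq₀ (norm_nonneg _) (norm_nonneg _)).1 ?_
  rw [norm_sub_sq_real, real_inner_smul_right, norm_smul, mul_pow, Real.norm_eq_abs, sq_abs]
  nlinarith [mul_le_mul_of_nonneg_left h hk]

end InnerProductSpace

section RotatedPotential

variable {n : ℕ} {Ω : Set (Euc n)} {u : Euc n → ℝ}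

lemma strongConvexOn_tildePot (hu : ConvexOn ℝ Ω u) :
    StrongConvexOn Ω (√2)⁻¹ (tildePot n u) := by
  have hsplit : (fun x => tildePot n u x - (√2)⁻¹ / 2 * ‖x‖ ^ 2) = fun x => (√2)⁻¹ • u x := by
    funext x
    simp only [tildePot, smul_eq_mul]
    ring
  rw [strongConvexOn_iff_convex, hsplit]
  exact hu.smul (inv_nonneg.2 (Real.sqrt_nonneg 2))

lemma legendreTransform_mem_Icc {f : Euc n → ℝ} {m : ℝ} (hm : 0 < m) {x p : Euc n} (hx : x ∈ Ω)
    (hp : ∀ y ∈ Ω, f x + ⟪p, y - x⟫ + m / 2 * ‖y - x‖ ^ 2 ≤ f y) (q : Euc n) :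
    legendreTransform n Ω f q ∈ Icc (⟪x, q⟫ - f x) (⟪x, q⟫ - f x + ‖q - p‖ ^ 2 / (2 * m)) := by
  have hbound : ∀ z ∈ (fun y => ⟪y, q⟫ - f y) '' Ω, z ≤ ⟪x, q⟫ - f x + ‖q - p‖ ^ 2 / (2 * m) :=
    forall_mem_image.2 fun y hy => inner_sub_le_of_strong_subgradient hm hp q hy
  exact ⟨le_csSup ⟨_, hbound⟩ (mem_image_of_mem _ hx),
    csSup_le (image_nonempty.2 ⟨x, hx⟩) hbound⟩

lemma rotPotential_eq (q : Euc n) :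
    rotPotential n Ω u q = ‖q‖ ^ 2 / 2 - √2 * legendreTransform n Ω (tildePot n u) q := by
  simp only [rotPotential]
  field_simp

lemma abs_rotPotential_sub_sub_inner_le (hu : ConvexOn ℝ Ω u) {x p : Euc n} (hx : x ∈ Ω)
    (hp : p ∈ subdiff n Ω (tildePot n u) x) (q : Euc n) :
    |rotPotential n Ω u q - rotPotential n Ω u p - ⟪p - √2 • x, q - p⟫| ≤ ‖q - p‖ ^ 2 / 2 := by
  have hstrong : ∀ y ∈ Ω,
      tildePot n u x + ⟪p, y - x⟫ + (√2)⁻¹ / 2 * ‖y - x‖ ^ 2 ≤ tildePot n u y :=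
    fun y hy => (strongConvexOn_tildePot hu).add_inner_add_sq_le hx hy hp
  have hm : (0 : ℝ) < (√2)⁻¹ := by positivity
  obtain ⟨hq₁, hq₂⟩ := legendreTransform_mem_Icc hm hx hstrong q
  obtain ⟨hp₁, hp₂⟩ := legendreTransform_mem_Icc hm hx hstrong p
  set L := legendreTransform n Ω (tildePot n u)
  rw [sub_self, norm_zero, zero_pow two_ne_zero, zero_div, add_zero] at hp₂
  have hgap : 0 ≤ √2 * (L q - L p - ⟪x, q - p⟫) := by
    rw [inner_sub_right]; exact mul_nonneg (Real.sqrt_nonneg 2) (by linarith)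
  have hgap' : √2 * (L q - L p - ⟪x, q - p⟫) ≤ ‖q - p‖ ^ 2 := by
    have hscale : √2 * (‖q - p‖ ^ 2 / (2 * (√2)⁻¹)) = ‖q - p‖ ^ 2 := by
      field_simp; rw [Real.sq_sqrt zero_le_two, mul_comm]
    rw [← hscale, inner_sub_right]
    exact mul_le_mul_of_nonneg_left (by linarith) (Real.sqrt_nonneg 2)
  have hexpand : rotPotential n Ω u q - rotPotential n Ω u p - ⟪p - √2 • x, q - p⟫
      = ‖q - p‖ ^ 2 / 2 - √2 * (L q - L p - ⟪x, q - p⟫) := by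
    rw [rotPotential_eq, rotPotential_eq, norm_sub_sq_real]
    simp only [inner_sub_left, inner_sub_right, real_inner_smul_left, real_inner_self_eq_norm_sq,
      real_inner_comm p q]
    ring
  rw [hexpand, abs_le]
  constructor <;> linarith

lemma hasGradientAt_rotPotential (hu : ConvexOn ℝ Ω u) {x p : Euc n} (hx : x ∈ Ω)
    (hp : p ∈ subdiff n Ω (tildePot n u) x) :
    HasGradientAt (rotPotential n Ω u) (p - √2 • x) p := by
  rw [hasGradientAt_iff_hasFDerivAt]
  refine hasFDerivAt_of_norm_sub_le_sq (1 / 2) fun q => ?_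
  rw [InnerProductSpace.toDual_apply_apply, Real.norm_eq_abs]
  linarith [abs_rotPotential_sub_sub_inner_le hu hx hp q]

lemma lipschitzOnWith_gradient_rotPotential (hu : ConvexOn ℝ Ω u) :
    LipschitzOnWith 1 (gradient (rotPotential n Ω u)) (subdiffImage n Ω (tildePot n u)) := by
  refine LipschitzOnWith.of_dist_le_mul fun p hp q hq => ?_
  obtain ⟨x, hx, hpx⟩ := mem_iUnion₂.1 hp
  obtain ⟨y, hy, hqy⟩ := mem_iUnion₂.1 hq
  rw [(hasGradientAt_rotPotential hu hx hpx).gradient,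
    (hasGradientAt_rotPotential hu hy hqy).gradient, dist_eq_norm, dist_eq_norm,
    NNReal.coe_one, one_mul, show p - √2 • x - (q - √2 • y) = p - q - √2 • (x - y) by module]
  refine norm_sub_smul_le_norm (Real.sqrt_nonneg 2) ?_
  have hmono := (strongConvexOn_tildePot hu).mul_sq_norm_sub_le_inner hx hy hpx hqy
  have hsqrt : √2 = 2 * (√2)⁻¹ := by
    field_simp; exact Real.sq_sqrt zero_le_two
  rw [hsqrt, mul_assoc]
  exact mul_le_mul_of_nonneg_left hmono zero_le_two

end RotatedPotential

theorem rotated_potential_C11_general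
    (n : ℕ) (Ω : Set (Euc n))
    (u : Euc n → ℝ) (hu_convex : ConvexOn ℝ Ω u) :
    (∀ p ∈ subdiffImage n Ω (tildePot n u), DifferentiableAt ℝ (rotPotential n Ω u) p) ∧
    (∀ p ∈ subdiffImage n Ω (tildePot n u),
      ∃ U ∈ 𝓝[subdiffImage n Ω (tildePot n u)] p,
        LipschitzOnWith 1 (gradient (rotPotential n Ω u)) U) ∧
    (∀ V ⊆ subdiffImage n Ω (tildePot n u), IsOpen V → Convex ℝ V →
      ConvexOn ℝ V (fun p => rotPotential n Ω u p + ‖p‖ ^ 2 / 2) ∧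
      ConvexOn ℝ V (fun p => ‖p‖ ^ 2 / 2 - rotPotential n Ω u p)) := by
  refine ⟨fun p hp => ?_, fun p _ => ?_, fun V hV _ hVconvex => ?_⟩
  · obtain ⟨x, hx, hpx⟩ := mem_iUnion₂.1 hp
    exact (hasGradientAt_rotPotential hu_convex hx hpx).differentiableAt
  · exact ⟨_, self_mem_nhdsWithin, lipschitzOnWith_gradient_rotPotential hu_convex⟩
  · refine convexOn_half_sq_norm_add_and_sub hVconvex fun p hp => ?_
    obtain ⟨x, hx, hpx⟩ := mem_iUnion₂.1 (hV hp)
    exact ⟨_, fun q _ => abs_rotPotential_sub_sub_inner_le hu_convex hx hpx q⟩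

/-- the π/4-rotated potential `ū` is differentiable on `Ω̄ = ∂ũ(Ω)`, its
gradient is locally Lipschitz with constant `1`, and `−Iₙ ≤ D²ū ≤ Iₙ` in the sense that
`ū + |x̄|²/2` and `|x̄|²/2 − ū` are convex on every open convex subset of `Ω̄`. -/
theorem rotated_potential_C11
    (n : ℕ) (Ω : Set (Euc n)) (hΩ_open : IsOpen Ω) (hΩ_convex : Convex ℝ Ω)
    (u : Euc n → ℝ) (hu_convex : ConvexOn ℝ Ω u) (hu_cont : ContinuousOn u Ω) :
    (∀ p ∈ subdiffImage n Ω (tildePot n u), DifferentiableAt ℝ (rotPotential n Ω u) p) ∧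
    (∀ p ∈ subdiffImage n Ω (tildePot n u),
      ∃ U ∈ 𝓝[subdiffImage n Ω (tildePot n u)] p,
        LipschitzOnWith 1 (gradient (rotPotential n Ω u)) U) ∧
    (∀ V ⊆ subdiffImage n Ω (tildePot n u), IsOpen V → Convex ℝ V →
      ConvexOn ℝ V (fun p => rotPotential n Ω u p + ‖p‖ ^ 2 / 2) ∧
      ConvexOn ℝ V (fun p => ‖p‖ ^ 2 / 2 - rotPotential n Ω u p)) :=
  rotated_potential_C11_general n Ω u hu_convex
end

section
/- Let u and v be convex continuous functions on an open convex set Ω ⊆ ℝⁿ, with π/4-rotated potentials ū (on ∂ũ(Ω)) and v̄ (on ∂ṽ(Ω)). (i) If u ≤ v on Ω, then ū(x̄) ≤ v̄(x̄) for every x̄ ∈ ∂ũ(Ω) ∩ ∂ṽ(Ω). (ii) In general, sup_{x̄ ∈ ∂ũ(Ω) ∩ ∂ṽ(Ω)} |ū(x̄) − v̄(x̄)| ≤ sup_{x ∈ Ω} |u(x) − v(x)|; in particular the rotation preserves uniform limits. -/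
open Set Metric MeasureTheory Filter
open scoped Topology NNReal RealInnerProductSpace

/-- If `p` lies in the subdifferential image of `w`, the Legendre transform is attained. -/
lemma legendre_attained (n : ℕ) (Ω : Set (Euc n)) (w : Euc n → ℝ) (p : Euc n)
    (hp : p ∈ subdiffImage n Ω w) :
    ∃ x₀ ∈ Ω, legendreTransform n Ω w p = ⟪x₀, p⟫ - w x₀ ∧
      ∀ y ∈ Ω, ⟪y, p⟫ - w y ≤ ⟪x₀, p⟫ - w x₀ := by
  simp only [subdiffImage, Set.mem_iUnion] at hp
  obtain ⟨x₀, hx₀, hsub⟩ := hp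
  have hub : ∀ y ∈ Ω, ⟪y, p⟫ - w y ≤ ⟪x₀, p⟫ - w x₀ := by
    intro y hy
    have h := hsub y hy
    have hinner : ⟪p, y - x₀⟫ = ⟪y, p⟫ - ⟪x₀, p⟫ := by
      rw [inner_sub_right, real_inner_comm p y, real_inner_comm p x₀]
    linarith [h, hinner.symm.le]
  refine ⟨x₀, hx₀, ?_, hub⟩
  unfold legendreTransform
  apply le_antisymm
  · refine csSup_le ⟨⟪x₀, p⟫ - w x₀, ⟨x₀, hx₀, rfl⟩⟩ ?_
    rintro z ⟨y, hy, rfl⟩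
    exact hub y hy
  · exact le_csSup ⟨⟪x₀, p⟫ - w x₀, by rintro z ⟨y, hy, rfl⟩; exact hub y hy⟩ ⟨x₀, hx₀, rfl⟩

/-- the π/4-rotation is order preserving and does not increase uniform
distances; in particular it preserves uniform limits. -/
theorem rotation_order_preserving
    (n : ℕ) (Ω : Set (Euc n)) (hΩ_open : IsOpen Ω) (hΩ_convex : Convex ℝ Ω)
    (u v : Euc n → ℝ)
    (hu_convex : ConvexOn ℝ Ω u) (hu_cont : ContinuousOn u Ω)
    (hv_convex : ConvexOn ℝ Ω v) (hv_cont : ContinuousOn v Ω) :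
    ((∀ x ∈ Ω, u x ≤ v x) →
      ∀ p ∈ subdiffImage n Ω (tildePot n u) ∩ subdiffImage n Ω (tildePot n v),
        rotPotential n Ω u p ≤ rotPotential n Ω v p) ∧
    (∀ M : ℝ, (∀ x ∈ Ω, |u x - v x| ≤ M) →
      ∀ p ∈ subdiffImage n Ω (tildePot n u) ∩ subdiffImage n Ω (tildePot n v),
        |rotPotential n Ω u p - rotPotential n Ω v p| ≤ M) := by
  have hs : (0:ℝ) < Real.sqrt 2 := by positivity
  have key : ∀ p ∈ subdiffImage n Ω (tildePot n u) ∩ subdiffImage n Ω (tildePot n v),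
      ∃ Lu Lv : ℝ,
        legendreTransform n Ω (tildePot n u) p = Lu ∧
        legendreTransform n Ω (tildePot n v) p = Lv ∧
        (∃ x₁ ∈ Ω, Lv = ⟪x₁, p⟫ - tildePot n v x₁ ∧ Lu ≥ ⟪x₁, p⟫ - tildePot n u x₁) ∧
        (∃ x₀ ∈ Ω, Lu = ⟪x₀, p⟫ - tildePot n u x₀ ∧ Lv ≥ ⟪x₀, p⟫ - tildePot n v x₀) := by
    intro p hp
    obtain ⟨x₀, hx₀, hLu, hubu⟩ := legendre_attained n Ω (tildePot n u) p hp.1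
    obtain ⟨x₁, hx₁, hLv, hubv⟩ := legendre_attained n Ω (tildePot n v) p hp.2
    exact ⟨_, _, hLu, hLv, ⟨x₁, hx₁, rfl, hubu x₁ hx₁⟩, ⟨x₀, hx₀, rfl, hubv x₀ hx₀⟩⟩
  constructor
  · intro hle p hp
    obtain ⟨Lu, Lv, hLu, hLv, ⟨x₁, hx₁, hv1, hu1⟩, _⟩ := key p hp
    have htil : tildePot n u x₁ ≤ tildePot n v x₁ := by
      have := hle x₁ hx₁
      simp only [tildePot]
      have : (Real.sqrt 2)⁻¹ * u x₁ ≤ (Real.sqrt 2)⁻¹ * v x₁ :=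
        mul_le_mul_of_nonneg_left this (by positivity)
      linarith
    have : Lv ≤ Lu := by rw [hv1]; linarith
    simp only [rotPotential, hLu, hLv]
    nlinarith
  · intro M hM p hp
    obtain ⟨Lu, Lv, hLu, hLv, ⟨x₁, hx₁, hv1, hu1⟩, ⟨x₀, hx₀, hu0, hv0⟩⟩ := key p hp
    have hsM : (Real.sqrt 2)⁻¹ * M * Real.sqrt 2 = M := by
      field_simp
    have hd1 : |u x₁ - v x₁| ≤ M := hM x₁ hx₁
    have hd0 : |u x₀ - v x₀| ≤ M := hM x₀ hx₀
    rw [abs_le] at hd1 hd0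
    -- Lv - Lu ≤ s*M
    have h1 : Lv - Lu ≤ (Real.sqrt 2)⁻¹ * M := by
      have : tildePot n u x₁ - tildePot n v x₁ ≤ (Real.sqrt 2)⁻¹ * M := by
        simp only [tildePot]
        have : (Real.sqrt 2)⁻¹ * (u x₁ - v x₁) ≤ (Real.sqrt 2)⁻¹ * M :=
          mul_le_mul_of_nonneg_left hd1.2 (by positivity)
        nlinarith
      rw [hv1]; linarith
    have h2 : Lu - Lv ≤ (Real.sqrt 2)⁻¹ * M := by
      have : tildePot n v x₀ - tildePot n u x₀ ≤ (Real.sqrt 2)⁻¹ * M := by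
        simp only [tildePot]
        have : (Real.sqrt 2)⁻¹ * (v x₀ - u x₀) ≤ (Real.sqrt 2)⁻¹ * M :=
          mul_le_mul_of_nonneg_left (by linarith [hd0.1]) (by positivity)
        nlinarith
      rw [hu0]; linarith
    have hexp : rotPotential n Ω u p - rotPotential n Ω v p = Real.sqrt 2 * (Lv - Lu) := by
      simp only [rotPotential, hLu, hLv]; ring
    rw [hexp, abs_le]
    constructor <;> nlinarith
end

section
/- Let u and v be convex continuous functions on an open convex set Ω ⊆ ℝⁿ, and set c = s = 1/√2, ũ(x) = s·u(x) + (c/2)|x|², ṽ(x) = s·v(x) + (c/2)|x|². If a, b ∈ Ω and x̄ ∈ ∂ũ(a) ∩ ∂ṽ(b), then |b − a|² ≤ 2√2 ( |ũ(a) − ṽ(a)| + |ũ(b) − ṽ(b)| ). -/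
open Set Metric MeasureTheory Filter
open scoped Topology NNReal RealInnerProductSpace

/-- if `x̄ ∈ ∂ũ(a) ∩ ∂ṽ(b)` then `|b − a|² ≤ 2√2 (|ũ−ṽ|(a) + |ũ−ṽ|(b))`. -/
theorem strict_convexity_estimate
    (n : ℕ) (Ω : Set (Euc n)) (hΩ_open : IsOpen Ω) (hΩ_convex : Convex ℝ Ω)
    (u v : Euc n → ℝ)
    (hu_convex : ConvexOn ℝ Ω u) (hu_cont : ContinuousOn u Ω)
    (hv_convex : ConvexOn ℝ Ω v) (hv_cont : ContinuousOn v Ω)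
    (a b : Euc n) (ha : a ∈ Ω) (hb : b ∈ Ω) (p : Euc n)
    (hpa : p ∈ subdiff n Ω (tildePot n u) a)
    (hpb : p ∈ subdiff n Ω (tildePot n v) b) :
    ‖b - a‖ ^ 2 ≤ 2 * Real.sqrt 2 *
      (|tildePot n u a - tildePot n v a| + |tildePot n u b - tildePot n v b|) := by

  set s : ℝ := Real.sqrt 2 with hs
  have hs0 : (0:ℝ) < s := Real.sqrt_pos.mpr (by norm_num)
  have hs2 : s * s = 2 := Real.mul_self_sqrt (by norm_num)
  set m : Euc n := (1/2:ℝ) • a + (1/2:ℝ) • b with hmdef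
  have hm : m ∈ Ω := hΩ_convex ha hb (by norm_num) (by norm_num) (by norm_num)
  have H1 := hpa m hm
  have H2 := hpb m hm
  have hu := hu_convex.2 ha hb (by norm_num : (0:ℝ) ≤ 1/2) (by norm_num : (0:ℝ) ≤ 1/2)
    (by norm_num : (1/2:ℝ) + 1/2 = 1)
  have hv := hv_convex.2 ha hb (by norm_num : (0:ℝ) ≤ 1/2) (by norm_num : (0:ℝ) ≤ 1/2)
    (by norm_num : (1/2:ℝ) + 1/2 = 1)
  rw [← hmdef] at hu hv
  simp only [smul_eq_mul] at hu hv
  -- inner product terms cancel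
  have hinner : ⟪p, m - a⟫ + ⟪p, m - b⟫ = 0 := by
    rw [← inner_add_right]
    have : (m - a) + (m - b) = 0 := by
      rw [hmdef]; module
    rw [this, inner_zero_right]
  -- norm identity for the midpoint
  have hm2 : m = (2:ℝ)⁻¹ • (a + b) := by rw [hmdef]; module
  have hnorm : ‖m‖ ^ 2 = (‖a‖ ^ 2 + ‖b‖ ^ 2) / 2 - ‖b - a‖ ^ 2 / 4 := by
    have h1 : ‖a + b‖ ^ 2 = ‖a‖ ^ 2 + 2 * ⟪a, b⟫ + ‖b‖ ^ 2 := norm_add_sq_real a b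
    have h2 : ‖b - a‖ ^ 2 = ‖b‖ ^ 2 - 2 * ⟪b, a⟫ + ‖a‖ ^ 2 := norm_sub_sq_real b a
    have hsym : ⟪b, a⟫ = ⟪a, b⟫ := real_inner_comm a b
    have h3 : ‖m‖ = |(2:ℝ)⁻¹| * ‖a + b‖ := by rw [hm2, norm_smul, Real.norm_eq_abs]
    have h4 : ‖m‖ ^ 2 = (2:ℝ)⁻¹ ^ 2 * ‖a + b‖ ^ 2 := by
      rw [h3]; rw [abs_of_pos (by norm_num : (0:ℝ) < (2:ℝ)⁻¹)]; ring
    rw [h4, h1, h2, hsym]; ring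
  simp only [tildePot] at H1 H2 ⊢
  rw [← hs] at H1 H2 ⊢
  set A : ℝ := s⁻¹ * u a + (2 * s)⁻¹ * ‖a‖ ^ 2 - (s⁻¹ * v a + (2 * s)⁻¹ * ‖a‖ ^ 2) with hA
  set B : ℝ := s⁻¹ * u b + (2 * s)⁻¹ * ‖b‖ ^ 2 - (s⁻¹ * v b + (2 * s)⁻¹ * ‖b‖ ^ 2) with hB
  clear_value A B
  have habs : B - A ≤ |A| + |B| := by
    have := neg_abs_le A
    have := le_abs_self B
    linarith
  have hsinv : s⁻¹ = s / 2 := by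
    field_simp
    nlinarith
  have h2sinv : (2 * s)⁻¹ = s / 4 := by
    rw [mul_inv, hsinv]; ring
  rw [hsinv, h2sinv, hnorm] at H1 H2
  rw [hsinv, h2sinv] at hA hB
  have hu' : s / 2 * u m ≤ s / 2 * (1 / 2 * u a + 1 / 2 * u b) :=
    mul_le_mul_of_nonneg_left hu (by positivity)
  have hv' : s / 2 * v m ≤ s / 2 * (1 / 2 * v a + 1 / 2 * v b) :=
    mul_le_mul_of_nonneg_left hv (by positivity)
  have key : s / 8 * ‖b - a‖ ^ 2 ≤ (B - A) / 2 := by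
    linarith [H1, H2, hu', hv', hinner, hA, hB]
  have key1 : s / 8 * ‖b - a‖ ^ 2 ≤ (|A| + |B|) / 2 := le_trans key (by linarith)
  have key2 : s * (s / 8 * ‖b - a‖ ^ 2) ≤ s * ((|A| + |B|) / 2) :=
    mul_le_mul_of_nonneg_left key1 hs0.le
  have key3 : s * (s / 8 * ‖b - a‖ ^ 2) = ‖b - a‖ ^ 2 / 4 := by
    have : s * (s / 8 * ‖b - a‖ ^ 2) = (s * s) * ‖b - a‖ ^ 2 / 8 := by ring
    rw [this, hs2]; ring
  rw [key3] at key2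
  linarith
end

section
/- Let u, u₁, u₂, … be convex continuous functions on an open convex set Ω ⊆ ℝⁿ with u_k → u uniformly on Ω, and let ū, ū_k denote the π/4-rotated potentials on Ω̄ = ∂ũ(Ω) and Ω̄_k = ∂ũ_k(Ω) respectively. Then for every compact set K ⊆ Ω̄ there exists k₀ such that K ⊆ Ω̄_k for all k ≥ k₀, and the gradients Dū_k converge uniformly on K to Dū as k → ∞. -/
open Set Metric MeasureTheory Filter
open scoped Topology NNReal RealInnerProductSpace

section AuxRot

variable {n : ℕ}

private lemma rg_sqrt2_pos : (0:ℝ) < Real.sqrt 2 := Real.sqrt_pos.mpr (by norm_num)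

private lemma rg_sqrt2_sq : Real.sqrt 2 * Real.sqrt 2 = 2 := Real.mul_self_sqrt (by norm_num)

/-- Strong (quadratic) subgradient inequality for `tildePot`. -/
private lemma rg_strong_ineq {Ω : Set (Euc n)} (hΩ : Convex ℝ Ω) {u : Euc n → ℝ}
    (hu : ConvexOn ℝ Ω u) {x p : Euc n} (hx : x ∈ Ω)
    (hp : p ∈ subdiff n Ω (tildePot n u) x) {y : Euc n} (hy : y ∈ Ω) :
    tildePot n u x + ⟪p, y - x⟫ + (4 * Real.sqrt 2)⁻¹ * ‖y - x‖ ^ 2 ≤ tildePot n u y := by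
  have hp' : ∀ z ∈ Ω, tildePot n u x + ⟪p, z - x⟫ ≤ tildePot n u z := hp
  have hm : (1/2 : ℝ) • x + (1/2 : ℝ) • y ∈ Ω :=
    hΩ hx hy (by norm_num) (by norm_num) (by norm_num)
  have h1 := hp' _ hm
  have hmx : (1/2 : ℝ) • x + (1/2 : ℝ) • y - x = (1/2 : ℝ) • (y - x) := by module
  have hinner : ⟪p, (1/2 : ℝ) • x + (1/2 : ℝ) • y - x⟫ = (1/2 : ℝ) * ⟪p, y - x⟫ := by
    rw [hmx, real_inner_smul_right]
  have hum : u ((1/2 : ℝ) • x + (1/2 : ℝ) • y) ≤ (1/2 : ℝ) * u x + (1/2 : ℝ) * u y :=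
    hu.2 hx hy (by norm_num) (by norm_num) (by norm_num)
  have hnm : ‖(1/2 : ℝ) • x + (1/2 : ℝ) • y‖ ^ 2 =
      (2 * ‖x‖ ^ 2 + 2 * ‖y‖ ^ 2 - ‖y - x‖ ^ 2) / 4 := by
    have h2 := norm_add_sq_real ((1/2 : ℝ) • x) ((1/2 : ℝ) • y)
    have h3 := norm_sub_sq_real y x
    have h4 : ⟪(1/2 : ℝ) • x, (1/2 : ℝ) • y⟫ = (1/2 : ℝ) * ((1/2 : ℝ) * ⟪x, y⟫) := by
      rw [real_inner_smul_left, real_inner_smul_right]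
    have h5 : ‖(1/2 : ℝ) • x‖ ^ 2 = (1/4 : ℝ) * ‖x‖ ^ 2 := by
      rw [norm_smul, Real.norm_eq_abs, abs_of_pos (by norm_num : (0:ℝ) < 1/2)]; ring
    have h6 : ‖(1/2 : ℝ) • y‖ ^ 2 = (1/4 : ℝ) * ‖y‖ ^ 2 := by
      rw [norm_smul, Real.norm_eq_abs, abs_of_pos (by norm_num : (0:ℝ) < 1/2)]; ring
    have h7 : ⟪x, y⟫ = ⟪y, x⟫ := real_inner_comm y x
    rw [h2, h4, h5, h6]
    linarith [h3]
  have hsnn : (0:ℝ) ≤ (Real.sqrt 2)⁻¹ := inv_nonneg.mpr rg_sqrt2_pos.le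
  have hmul := mul_le_mul_of_nonneg_left hum hsnn
  have hc2 : (2 * Real.sqrt 2)⁻¹ = (Real.sqrt 2)⁻¹ / 2 := by rw [mul_inv]; ring
  have hc4 : (4 * Real.sqrt 2)⁻¹ = (Real.sqrt 2)⁻¹ / 4 := by rw [mul_inv]; ring
  simp only [tildePot] at h1 ⊢
  rw [hinner, hnm] at h1
  rw [hc2] at h1 ⊢
  rw [hc4]
  nlinarith [h1, hmul]

/-- Two-sided bounds on the Legendre transform of `tildePot` near a subgradient point. -/
private lemma rg_legendre_bounds {Ω : Set (Euc n)} (hΩ : Convex ℝ Ω) {u : Euc n → ℝ}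
    (hu : ConvexOn ℝ Ω u) {x p : Euc n} (hx : x ∈ Ω)
    (hp : p ∈ subdiff n Ω (tildePot n u) x) (q : Euc n) :
    ⟪x, q⟫ - tildePot n u x ≤ legendreTransform n Ω (tildePot n u) q ∧
      legendreTransform n Ω (tildePot n u) q ≤
        ⟪x, q⟫ - tildePot n u x + Real.sqrt 2 * ‖q - p‖ ^ 2 := by
  have h0 : (4 * Real.sqrt 2) ≠ 0 := by positivity
  have h48 : (4 * Real.sqrt 2)⁻¹ = Real.sqrt 2 / 8 := by
    rw [eq_div_iff (by norm_num : (8:ℝ) ≠ 0), inv_mul_eq_div, div_eq_iff h0]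
    linear_combination (-4 : ℝ) * rg_sqrt2_sq
  have hbound : ∀ y ∈ Ω, ⟪y, q⟫ - tildePot n u y ≤
      ⟪x, q⟫ - tildePot n u x + Real.sqrt 2 * ‖q - p‖ ^ 2 := by
    intro y hy
    have h1 := rg_strong_ineq hΩ hu hx hp hy
    have h2 : ⟪y - x, q - p⟫ ≤ ‖y - x‖ * ‖q - p‖ := real_inner_le_norm _ _
    have hid : ⟪y - x, q - p⟫ + ⟪p, y - x⟫ = ⟪y, q⟫ - ⟪x, q⟫ := by
      simp only [inner_sub_left, inner_sub_right]
      rw [real_inner_comm p y, real_inner_comm p x]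
      ring
    have young : ‖y - x‖ * ‖q - p‖ ≤
        (4 * Real.sqrt 2)⁻¹ * ‖y - x‖ ^ 2 + Real.sqrt 2 * ‖q - p‖ ^ 2 := by
      rw [h48]
      have hexp : Real.sqrt 2 / 8 * (‖y - x‖ - 2 * Real.sqrt 2 * ‖q - p‖) ^ 2
          = Real.sqrt 2 / 8 * ‖y - x‖ ^ 2 - ‖y - x‖ * ‖q - p‖
            + Real.sqrt 2 * ‖q - p‖ ^ 2 := by
        linear_combination ((Real.sqrt 2 * ‖q - p‖ ^ 2 - ‖y - x‖ * ‖q - p‖) / 2) * rg_sqrt2_sq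
      have hsq : 0 ≤ Real.sqrt 2 / 8 * (‖y - x‖ - 2 * Real.sqrt 2 * ‖q - p‖) ^ 2 := by
        positivity
      linarith
    linarith
  have hne : ((fun y => ⟪y, q⟫ - tildePot n u y) '' Ω).Nonempty := ⟨_, x, hx, rfl⟩
  have hbdd : BddAbove ((fun y => ⟪y, q⟫ - tildePot n u y) '' Ω) := by
    refine ⟨⟪x, q⟫ - tildePot n u x + Real.sqrt 2 * ‖q - p‖ ^ 2, ?_⟩
    rintro z ⟨y, hy, rfl⟩
    exact hbound y hy
  simp only [legendreTransform]
  constructor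
  · exact le_csSup hbdd ⟨x, hx, rfl⟩
  · exact csSup_le hne (by rintro z ⟨y, hy, rfl⟩; exact hbound y hy)

/-- Gradient of the rotated potential at a subgradient point. -/
private lemma rg_hasGradientAt {Ω : Set (Euc n)} (hΩ : Convex ℝ Ω) {u : Euc n → ℝ}
    (hu : ConvexOn ℝ Ω u) {x p : Euc n} (hx : x ∈ Ω)
    (hp : p ∈ subdiff n Ω (tildePot n u) x) :
    HasGradientAt (rotPotential n Ω u) (p - Real.sqrt 2 • x) p := by
  have h0 : Real.sqrt 2 ≠ 0 := ne_of_gt rg_sqrt2_pos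
  set L := legendreTransform n Ω (tildePot n u) with hLdef
  have hLp : L p = ⟪x, p⟫ - tildePot n u x := by
    have h := rg_legendre_bounds hΩ hu hx hp p
    have hz : Real.sqrt 2 * ‖p - p‖ ^ 2 = 0 := by simp
    rw [← hLdef] at h
    linarith [h.1, h.2]
  have hhalf : Real.sqrt 2 * (2 * Real.sqrt 2)⁻¹ = 1 / 2 := by
    field_simp
  have key : ∀ q : Euc n, ‖rotPotential n Ω u q - rotPotential n Ω u p -
      ⟪p - Real.sqrt 2 • x, q - p⟫‖ ≤ 2 * ‖q - p‖ ^ 2 := by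
    intro q
    have hb := rg_legendre_bounds hΩ hu hx hp q
    rw [← hLdef] at hb
    have hq2 : ‖q‖ ^ 2 = ‖p‖ ^ 2 + 2 * ⟪p, q - p⟫ + ‖q - p‖ ^ 2 := by
      have h := norm_add_sq_real p (q - p)
      rwa [add_sub_cancel] at h
    have hG : ⟪p - Real.sqrt 2 • x, q - p⟫ = ⟪p, q - p⟫ - Real.sqrt 2 * ⟪x, q - p⟫ := by
      rw [inner_sub_left, real_inner_smul_left]
    have hxq : ⟪x, q - p⟫ = ⟪x, q⟫ - ⟪x, p⟫ := inner_sub_right _ _ _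
    have hA : rotPotential n Ω u q - rotPotential n Ω u p -
        ⟪p - Real.sqrt 2 • x, q - p⟫ =
        ‖q - p‖ ^ 2 / 2 - Real.sqrt 2 * (L q - (⟪x, q⟫ - tildePot n u x)) := by
      simp only [rotPotential, ← hLdef]
      rw [hG, hxq, hLp]
      linear_combination (‖q‖ ^ 2 - ‖p‖ ^ 2) * hhalf + (1/2 : ℝ) * hq2
    have hR0 : 0 ≤ L q - (⟪x, q⟫ - tildePot n u x) := by linarith [hb.1]
    have hR1 : L q - (⟪x, q⟫ - tildePot n u x) ≤ Real.sqrt 2 * ‖q - p‖ ^ 2 := by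
      linarith [hb.2]
    have h2d : Real.sqrt 2 * (Real.sqrt 2 * ‖q - p‖ ^ 2) = 2 * ‖q - p‖ ^ 2 := by
      linear_combination ‖q - p‖ ^ 2 * rg_sqrt2_sq
    have hs1 : 0 ≤ Real.sqrt 2 * (L q - (⟪x, q⟫ - tildePot n u x)) :=
      mul_nonneg rg_sqrt2_pos.le hR0
    have hs2 : Real.sqrt 2 * (L q - (⟪x, q⟫ - tildePot n u x)) ≤
        Real.sqrt 2 * (Real.sqrt 2 * ‖q - p‖ ^ 2) :=
      mul_le_mul_of_nonneg_left hR1 rg_sqrt2_pos.le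
    rw [hA, Real.norm_eq_abs, abs_le]
    constructor <;> nlinarith [sq_nonneg ‖q - p‖]
  rw [hasGradientAt_iff_isLittleO, Asymptotics.isLittleO_iff]
  intro c hc
  filter_upwards [Metric.ball_mem_nhds p (show (0:ℝ) < c / 2 by positivity)] with q hq
  have h1 := key q
  have h2 : ‖q - p‖ < c / 2 := by rwa [Metric.mem_ball, dist_eq_norm] at hq
  calc ‖rotPotential n Ω u q - rotPotential n Ω u p - ⟪p - Real.sqrt 2 • x, q - p⟫‖
      ≤ 2 * ‖q - p‖ ^ 2 := h1
    _ ≤ c * ‖q - p‖ := by nlinarith [norm_nonneg (q - p)]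

/-- Stability of subgradient points under uniform perturbation. -/
private lemma rg_stability {Ω : Set (Euc n)} (hΩ : Convex ℝ Ω) {u v : Euc n → ℝ}
    (hu : ConvexOn ℝ Ω u) (hv : ConvexOn ℝ Ω v) (hvc : ContinuousOn v Ω)
    {x p : Euc n} (hx : x ∈ Ω) (hp : p ∈ subdiff n Ω (tildePot n u) x)
    {r δ : ℝ} (hr : 0 < r) (hball : Metric.closedBall x r ⊆ Ω)
    (hδ : 0 < δ) (hδr : δ ≤ r ^ 2 / 16)
    (hclose : ∀ y ∈ Ω, |v y - u y| ≤ δ) :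
    ∃ y₀ ∈ Ω, p ∈ subdiff n Ω (tildePot n v) y₀ ∧ ‖y₀ - x‖ ^ 2 ≤ 8 * δ := by
  set g : Euc n → ℝ := fun y => tildePot n v y - ⟪p, y⟫ with hgdef
  have htvc : ContinuousOn (tildePot n v) Ω := by
    unfold tildePot
    exact (continuousOn_const.mul hvc).add
      (continuousOn_const.mul ((continuous_norm.pow 2).continuousOn))
  have hgc : ContinuousOn g (Metric.closedBall x r) :=
    (htvc.mono hball).sub ((continuous_const.inner continuous_id).continuousOn)
  obtain ⟨y₀, hy₀b, hy₀min⟩ := (isCompact_closedBall x r).exists_isMinOn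
    ⟨x, Metric.mem_closedBall_self hr.le⟩ hgc
  clear_value g
  have hy₀Ω : y₀ ∈ Ω := hball hy₀b
  have hsnn : (0:ℝ) ≤ (Real.sqrt 2)⁻¹ := inv_nonneg.mpr rg_sqrt2_pos.le
  have hcomp : ∀ y ∈ Ω, |tildePot n v y - tildePot n u y| ≤ (Real.sqrt 2)⁻¹ * δ := by
    intro y hy
    have he : tildePot n v y - tildePot n u y = (Real.sqrt 2)⁻¹ * (v y - u y) := by
      simp only [tildePot]; ring
    rw [he, abs_mul, abs_of_nonneg hsnn]
    exact mul_le_mul_of_nonneg_left (hclose y hy) hsnn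
  have hkey : ∀ y ∈ Ω, g x + (4 * Real.sqrt 2)⁻¹ * ‖y - x‖ ^ 2
      - 2 * ((Real.sqrt 2)⁻¹ * δ) ≤ g y := by
    intro y hy
    have h1 := rg_strong_ineq hΩ hu hx hp hy
    have h2' := abs_le.mp (hcomp y hy)
    have h3' := abs_le.mp (hcomp x hx)
    have h4 : ⟪p, y - x⟫ = ⟪p, y⟫ - ⟪p, x⟫ := inner_sub_right _ _ _
    simp only [hgdef]
    linarith [h1]
  have hmin : ∀ y ∈ Metric.closedBall x r, g y₀ ≤ g y := fun y hy =>
    isMinOn_iff.mp hy₀min y hy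
  have hdist : ‖y₀ - x‖ ^ 2 ≤ 8 * δ := by
    have h1 := hkey y₀ hy₀Ω
    have h2 := hmin x (Metric.mem_closedBall_self hr.le)
    have h3 : (4 * Real.sqrt 2)⁻¹ * ‖y₀ - x‖ ^ 2 ≤ 2 * ((Real.sqrt 2)⁻¹ * δ) := by
      linarith
    have h4 := mul_le_mul_of_nonneg_left h3 (by positivity : (0:ℝ) ≤ 4 * Real.sqrt 2)
    have h5 : (4 * Real.sqrt 2) * ((4 * Real.sqrt 2)⁻¹ * ‖y₀ - x‖ ^ 2) = ‖y₀ - x‖ ^ 2 := by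
      rw [← mul_assoc, mul_inv_cancel₀ (by positivity : (4 : ℝ) * Real.sqrt 2 ≠ 0), one_mul]
    have h6 : (4 * Real.sqrt 2) * (2 * ((Real.sqrt 2)⁻¹ * δ)) = 8 * δ := by
      have h0 : Real.sqrt 2 ≠ 0 := ne_of_gt rg_sqrt2_pos
      field_simp
      ring
    rw [h5, h6] at h4
    exact h4
  have hlt : ‖y₀ - x‖ < r := by
    have h1 : ‖y₀ - x‖ ^ 2 < r ^ 2 := by nlinarith
    exact lt_of_pow_lt_pow_left₀ 2 hr.le h1
  refine ⟨y₀, hy₀Ω, ?_, hdist⟩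
  simp only [subdiff, Set.mem_setOf_eq]
  intro z hz
  have hgoal : g y₀ ≤ g z → tildePot n v y₀ + ⟪p, z - y₀⟫ ≤ tildePot n v z := by
    intro h
    have h4 : ⟪p, z - y₀⟫ = ⟪p, z⟫ - ⟪p, y₀⟫ := inner_sub_right _ _ _
    simp only [hgdef] at h
    linarith
  apply hgoal
  rcases eq_or_ne z y₀ with rfl | hne
  · exact le_refl _
  have hd : 0 < ‖z - y₀‖ := by
    rw [norm_pos_iff, sub_ne_zero]; exact hne
  set t : ℝ := min 1 ((r - ‖y₀ - x‖) / ‖z - y₀‖) with htdef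
  have ht0 : 0 < t := lt_min one_pos (div_pos (by linarith) hd)
  have ht1 : t ≤ 1 := min_le_left _ _
  have htle : t ≤ (r - ‖y₀ - x‖) / ‖z - y₀‖ := min_le_right _ _
  clear_value t
  set w : Euc n := (1 - t) • y₀ + t • z with hwdef
  clear_value w
  have hwΩ : w ∈ Ω := by
    rw [hwdef]
    exact hΩ hy₀Ω hz (by linarith) ht0.le (by ring)
  have hwball : w ∈ Metric.closedBall x r := by
    have hrep : w - x = (y₀ - x) + t • (z - y₀) := by rw [hwdef]; module
    have hn1 : ‖t • (z - y₀)‖ = t * ‖z - y₀‖ := by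
      rw [norm_smul, Real.norm_eq_abs, abs_of_pos ht0]
    have hn2 : t * ‖z - y₀‖ ≤ r - ‖y₀ - x‖ := by
      calc t * ‖z - y₀‖ ≤ ((r - ‖y₀ - x‖) / ‖z - y₀‖) * ‖z - y₀‖ :=
            mul_le_mul_of_nonneg_right htle (norm_nonneg _)
        _ = r - ‖y₀ - x‖ := div_mul_cancel₀ _ (ne_of_gt hd)
    rw [Metric.mem_closedBall, dist_eq_norm, hrep]
    calc ‖(y₀ - x) + t • (z - y₀)‖ ≤ ‖y₀ - x‖ + ‖t • (z - y₀)‖ := norm_add_le _ _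
      _ ≤ r := by rw [hn1]; linarith
  have hconvv : v w ≤ (1 - t) * v y₀ + t * v z := by
    have h := hv.2 hy₀Ω hz (by linarith : (0:ℝ) ≤ 1 - t) ht0.le (by ring)
    rwa [← hwdef] at h
  have hnormsq : ‖w‖ ^ 2 ≤ (1 - t) * ‖y₀‖ ^ 2 + t * ‖z‖ ^ 2 := by
    have e1 := norm_add_sq_real ((1 - t) • y₀) (t • z)
    have e2 := norm_sub_sq_real y₀ z
    have e3 : ⟪(1 - t) • y₀, t • z⟫ = (1 - t) * (t * ⟪y₀, z⟫) := by
      rw [real_inner_smul_left, real_inner_smul_right]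
    have e4 : ‖(1 - t) • y₀‖ ^ 2 = (1 - t) ^ 2 * ‖y₀‖ ^ 2 := by
      rw [norm_smul, Real.norm_eq_abs, abs_of_nonneg (by linarith : (0:ℝ) ≤ 1 - t)]; ring
    have e5 : ‖t • z‖ ^ 2 = t ^ 2 * ‖z‖ ^ 2 := by
      rw [norm_smul, Real.norm_eq_abs, abs_of_pos ht0]; ring
    rw [hwdef, e1, e3, e4, e5]
    nlinarith [mul_nonneg (mul_nonneg ht0.le (by linarith : (0:ℝ) ≤ 1 - t))
      (sq_nonneg ‖y₀ - z‖), e2]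
  have hinw : ⟪p, w⟫ = (1 - t) * ⟪p, y₀⟫ + t * ⟪p, z⟫ := by
    rw [hwdef, inner_add_right, real_inner_smul_right, real_inner_smul_right]
  have hgww : g w ≤ (1 - t) * g y₀ + t * g z := by
    have hA := mul_le_mul_of_nonneg_left hconvv hsnn
    have hB := mul_le_mul_of_nonneg_left hnormsq
      (by positivity : (0:ℝ) ≤ (2 * Real.sqrt 2)⁻¹)
    simp only [hgdef, tildePot]
    rw [hinw]
    nlinarith [hA, hB]
  have hmw := hmin w hwball
  have hfin : t * g y₀ ≤ t * g z := by nlinarith [hgww, hmw]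
  exact le_of_mul_le_mul_left hfin ht0

end AuxRot

/-- if convex `u_k → u` uniformly on `Ω`, then every compact `K ⊆ ∂ũ(Ω)` is
eventually contained in `∂ũ_k(Ω)`, and `Dū_k → Dū` uniformly on `K`. -/
theorem rotated_gradients_converge
    (n : ℕ) (Ω : Set (Euc n)) (hΩ_open : IsOpen Ω) (hΩ_convex : Convex ℝ Ω)
    (u : Euc n → ℝ) (uk : ℕ → Euc n → ℝ)
    (hu_convex : ConvexOn ℝ Ω u) (hu_cont : ContinuousOn u Ω)
    (huk_convex : ∀ k, ConvexOn ℝ Ω (uk k)) (huk_cont : ∀ k, ContinuousOn (uk k) Ω)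
    (h_unif : TendstoUniformlyOn uk u Filter.atTop Ω) :
    ∀ K : Set (Euc n), IsCompact K → K ⊆ subdiffImage n Ω (tildePot n u) →
      (∃ k₀ : ℕ, ∀ k ≥ k₀, K ⊆ subdiffImage n Ω (tildePot n (uk k))) ∧
      TendstoUniformlyOn (fun k => gradient (rotPotential n Ω (uk k)))
        (gradient (rotPotential n Ω u)) Filter.atTop K := by
  intro K hK hKsub
  rcases K.eq_empty_or_nonempty with rfl | hKne
  · exact ⟨⟨0, fun k _ => empty_subset _⟩, tendstoUniformlyOn_empty⟩
  have hch : ∀ p, p ∈ K → ∃ z, z ∈ Ω ∧ p ∈ subdiff n Ω (tildePot n u) z := by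
    intro p hp
    have h := hKsub hp
    simp only [subdiffImage, Set.mem_iUnion, exists_prop] at h
    exact h
  choose! xc hxΩ hxp using hch
  -- the contact points depend Lipschitz-continuously on the slope
  have hxlip : ∀ p ∈ K, ∀ q ∈ K, dist (xc p) (xc q) ≤ (2 * Real.sqrt 2) * dist p q := by
    intro p hp q hq
    have h1 := rg_strong_ineq hΩ_convex hu_convex (hxΩ p hp) (hxp p hp) (hxΩ q hq)
    have h2 := rg_strong_ineq hΩ_convex hu_convex (hxΩ q hq) (hxp q hq) (hxΩ p hp)
    have hnr2 : (4 * Real.sqrt 2)⁻¹ * ‖xc q - xc p‖ ^ 2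
        = (4 * Real.sqrt 2)⁻¹ * ‖xc p - xc q‖ ^ 2 := by rw [norm_sub_rev]
    have hCS : ⟪p - q, xc p - xc q⟫ ≤ ‖p - q‖ * ‖xc p - xc q‖ := real_inner_le_norm _ _
    have hid : ⟪p, xc q - xc p⟫ + ⟪q, xc p - xc q⟫ = -⟪p - q, xc p - xc q⟫ := by
      simp only [inner_sub_left, inner_sub_right]
      ring
    have hc24 : (4 * Real.sqrt 2)⁻¹ * ‖xc p - xc q‖ ^ 2
        + (4 * Real.sqrt 2)⁻¹ * ‖xc p - xc q‖ ^ 2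
        = (2 * Real.sqrt 2)⁻¹ * ‖xc p - xc q‖ ^ 2 := by
      rw [mul_inv, mul_inv]; ring
    have hI : (2 * Real.sqrt 2)⁻¹ * ‖xc p - xc q‖ ^ 2 ≤ ‖p - q‖ * ‖xc p - xc q‖ := by
      linarith [h1, h2, hid, hCS, hnr2, hc24]
    rw [dist_eq_norm, dist_eq_norm]
    rcases eq_or_lt_of_le (norm_nonneg (xc p - xc q)) with h0 | h0
    · rw [← h0]; positivity
    · have h4 := mul_le_mul_of_nonneg_left hI
        (by positivity : (0:ℝ) ≤ 2 * Real.sqrt 2)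
      have h5 : (2 * Real.sqrt 2) * ((2 * Real.sqrt 2)⁻¹ * ‖xc p - xc q‖ ^ 2)
          = ‖xc p - xc q‖ * ‖xc p - xc q‖ := by
        rw [← mul_assoc, mul_inv_cancel₀ (by positivity : (2:ℝ) * Real.sqrt 2 ≠ 0), one_mul]
        ring
      have h6 : (2 * Real.sqrt 2) * (‖p - q‖ * ‖xc p - xc q‖)
          = ((2 * Real.sqrt 2) * ‖p - q‖) * ‖xc p - xc q‖ := by ring
      rw [h5, h6] at h4
      exact le_of_mul_le_mul_right h4 h0
  have hlip : LipschitzOnWith (Real.toNNReal (2 * Real.sqrt 2)) xc K := by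
    apply LipschitzOnWith.of_dist_le_mul
    intro a ha b hb
    rw [Real.coe_toNNReal _ (by positivity : (0:ℝ) ≤ 2 * Real.sqrt 2)]
    exact hxlip a ha b hb
  have hXcomp : IsCompact (xc '' K) := hK.image_of_continuousOn hlip.continuousOn
  have hXsub : xc '' K ⊆ Ω := by rintro _ ⟨p, hp, rfl⟩; exact hxΩ p hp
  obtain ⟨r, hrpos, hrsub⟩ := hXcomp.exists_cthickening_subset_open hΩ_open hXsub
  have hballs : ∀ p ∈ K, Metric.closedBall (xc p) r ⊆ Ω := fun p hp =>
    (Metric.closedBall_subset_cthickening (Set.mem_image_of_mem xc hp) r).trans hrsub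
  have hgradu : ∀ p ∈ K, gradient (rotPotential n Ω u) p = p - Real.sqrt 2 • xc p :=
    fun p hp => (rg_hasGradientAt hΩ_convex hu_convex (hxΩ p hp) (hxp p hp)).gradient
  constructor
  · -- eventual containment
    have hev := Metric.tendstoUniformlyOn_iff.mp h_unif (r ^ 2 / 16) (by positivity)
    rw [Filter.eventually_atTop] at hev
    obtain ⟨k₀, hk₀⟩ := hev
    refine ⟨k₀, fun k hk p hp => ?_⟩
    have hclose : ∀ y ∈ Ω, |uk k y - u y| ≤ r ^ 2 / 16 := by
      intro y hy
      have h := hk₀ k hk y hy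
      rw [Real.dist_eq, abs_sub_comm] at h
      exact h.le
    obtain ⟨y₀, hy₀Ω, hy₀sub, -⟩ := rg_stability hΩ_convex hu_convex (huk_convex k)
      (huk_cont k) (hxΩ p hp) (hxp p hp) hrpos (hballs p hp) (by positivity) le_rfl hclose
    simp only [subdiffImage, Set.mem_iUnion, exists_prop]
    exact ⟨y₀, hy₀Ω, hy₀sub⟩
  · -- uniform convergence of the gradients
    rw [Metric.tendstoUniformlyOn_iff]
    intro ε hε
    set δ : ℝ := min (r ^ 2 / 16) (ε ^ 2 / 32) with hδdef
    have hδpos : 0 < δ := lt_min (by positivity) (by positivity)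
    have hδr1 : δ ≤ r ^ 2 / 16 := min_le_left _ _
    have hδ2 : δ ≤ ε ^ 2 / 32 := min_le_right _ _
    clear_value δ
    filter_upwards [Metric.tendstoUniformlyOn_iff.mp h_unif δ hδpos] with k hk p hp
    have hclose : ∀ y ∈ Ω, |uk k y - u y| ≤ δ := by
      intro y hy
      have h := hk y hy
      rw [Real.dist_eq, abs_sub_comm] at h
      exact h.le
    obtain ⟨y₀, hy₀Ω, hy₀sub, hy₀d⟩ := rg_stability hΩ_convex hu_convex (huk_convex k)
      (huk_cont k) (hxΩ p hp) (hxp p hp) hrpos (hballs p hp) hδpos hδr1 hclose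
    have hgk : gradient (rotPotential n Ω (uk k)) p = p - Real.sqrt 2 • y₀ :=
      (rg_hasGradientAt hΩ_convex (huk_convex k) hy₀Ω hy₀sub).gradient
    rw [hgradu p hp, hgk, dist_eq_norm]
    have hdiff : (p - Real.sqrt 2 • xc p) - (p - Real.sqrt 2 • y₀) =
        Real.sqrt 2 • (y₀ - xc p) := by module
    rw [hdiff, norm_smul, Real.norm_eq_abs, abs_of_pos rg_sqrt2_pos]
    have h1 : (Real.sqrt 2 * ‖y₀ - xc p‖) ^ 2 < ε ^ 2 := by
      have he : (Real.sqrt 2 * ‖y₀ - xc p‖) ^ 2 = 2 * ‖y₀ - xc p‖ ^ 2 := by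
        linear_combination ‖y₀ - xc p‖ ^ 2 * rg_sqrt2_sq
      rw [he]
      nlinarith [hy₀d, hδ2, pow_pos hε 2]
    exact lt_of_pow_lt_pow_left₀ 2 hε.le h1
end

section
/- Let Ω ⊆ ℝⁿ be open, convex and connected, and let w : Ω → ℝ be a continuous function such that w(x) − (μ/2)|x|² is convex on Ω for some μ > 0 (i.e. w is uniformly convex). Then the image of the subdifferential ∂w(Ω) = ⋃_{x∈Ω} ∂w(x) is an open and connected subset of ℝⁿ. -/
open Set Metric MeasureTheory Filter
open scoped Topology NNReal RealInnerProductSpace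

section AuxSubdiff

variable {n : ℕ}

lemma convexOn_sq_norm : ConvexOn ℝ (univ : Set (Euc n)) (fun x => ‖x‖ ^ 2) := by
  refine ⟨convex_univ, fun x _ y _ a b ha hb hab => ?_⟩
  simp only [smul_eq_mul]
  have h1 : ‖a • x + b • y‖ ^ 2
      = a^2*‖x‖^2 + 2*(a*b)*⟪x, y⟫ + b^2*‖y‖^2 := by
    rw [norm_add_sq_real, real_inner_smul_left, real_inner_smul_right, norm_smul, norm_smul]
    simp only [Real.norm_eq_abs, mul_pow, sq_abs]
    ring
  have h2 := real_inner_le_norm x y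
  nlinarith [norm_nonneg x, norm_nonneg y, sq_nonneg (‖x‖ - ‖y‖), mul_nonneg ha hb]

lemma convexOn_of_unif {Ω : Set (Euc n)} {w : Euc n → ℝ} {μ : ℝ} (hμ : 0 < μ)
    (hΩc : Convex ℝ Ω)
    (h : ConvexOn ℝ Ω (fun x => w x - μ / 2 * ‖x‖ ^ 2)) : ConvexOn ℝ Ω w := by
  have hsq : ConvexOn ℝ Ω (fun x : Euc n => (μ/2) * ‖x‖ ^ 2) := by
    have := ConvexOn.smul (c := μ/2) (by positivity) (convexOn_sq_norm (n := n))
    exact (this.subset (subset_univ Ω) hΩc)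
  have hadd := h.add hsq
  have he : w = ((fun x => w x - μ / 2 * ‖x‖ ^ 2) + fun x : Euc n => μ/2 * ‖x‖ ^ 2) := by
    funext z; simp only [Pi.add_apply]; ring
  rw [he]; exact hadd

lemma subdiff_convex {Ω : Set (Euc n)} {w : Euc n → ℝ} (x : Euc n) :
    Convex ℝ (subdiff n Ω w x) := by
  intro p hp q hq a b ha hb hab
  simp only [subdiff, Set.mem_setOf_eq] at hp hq ⊢
  intro y hy
  have h1 := hp y hy
  have h2 := hq y hy
  have hin : ⟪a • p + b • q, y - x⟫ = a * ⟪p, y - x⟫ + b * ⟪q, y - x⟫ := by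
    rw [inner_add_left, real_inner_smul_left, real_inner_smul_left]
  rw [hin]
  have hb' : b = 1 - a := by linarith
  subst hb'
  nlinarith [mul_le_mul_of_nonneg_left h1 ha,
    mul_le_mul_of_nonneg_left h2 (by linarith : (0:ℝ) ≤ 1 - a)]

/-- Strong (uniform) subgradient inequality. -/
lemma strong_ineq {Ω : Set (Euc n)} {w : Euc n → ℝ} {μ : ℝ} (hμ : 0 < μ)
    (hΩc : Convex ℝ Ω)
    (h : ConvexOn ℝ Ω (fun x => w x - μ / 2 * ‖x‖ ^ 2))
    {x p : Euc n} (hx : x ∈ Ω) (hp : p ∈ subdiff n Ω w x) {y : Euc n} (hy : y ∈ Ω) :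
    w x + ⟪p, y - x⟫ + μ / 2 * ‖y - x‖ ^ 2 ≤ w y := by
  simp only [subdiff, Set.mem_setOf_eq] at hp
  have key : ∀ t : ℝ, 0 < t → t ≤ 1 →
      ⟪p, y - x⟫ + μ/2*(1-t)*‖y - x‖^2 ≤ w y - w x := by
    intro t ht0 ht1
    have hz : (1-t) • x + t • y ∈ Ω := hΩc hx hy (by linarith) ht0.le (by ring)
    have hsub := hp _ hz
    have hcv := h.2 hx hy (by linarith : (0:ℝ) ≤ 1 - t) ht0.le (by ring)
    simp only [smul_eq_mul] at hcv
    have hzx : (1-t) • x + t • y - x = t • (y - x) := by module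
    rw [hzx, real_inner_smul_right] at hsub
    have hnorm : ‖(1-t) • x + t • y‖^2
        = (1-t)*‖x‖^2 + t*‖y‖^2 - t*(1-t)*‖y - x‖^2 := by
      have e1 := norm_add_sq_real ((1-t) • x) (t • y)
      rw [real_inner_smul_left, real_inner_smul_right, norm_smul, norm_smul] at e1
      simp only [Real.norm_eq_abs, mul_pow, sq_abs] at e1
      have e2 := norm_sub_sq_real y x
      linear_combination e1 + (t*(1-t)) * e2 - (2*t*(1-t)) * (real_inner_comm x y)
    rw [hnorm] at hcv
    have key2 : t * ⟪p, y - x⟫ + μ/2*t*(1-t)*‖y - x‖^2 ≤ t * w y - t * w x := by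
      nlinarith [hsub, hcv]
    have h' : t * (⟪p, y - x⟫ + μ/2*(1-t)*‖y - x‖^2) ≤ t * (w y - w x) := by
      nlinarith [key2]
    exact le_of_mul_le_mul_left h' ht0
  have hD0 : (0:ℝ) ≤ ‖y - x‖^2 := by positivity
  set c : ℝ := μ/2*‖y - x‖^2 with hc
  have hc0 : 0 ≤ c := by positivity
  refine le_of_forall_pos_le_add fun ε hε => ?_
  set t : ℝ := min 1 (ε/(c+1)) with htdef
  have ht0 : 0 < t := lt_min one_pos (by positivity)
  have ht1 : t ≤ 1 := min_le_left _ _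
  have hk := key t ht0 ht1
  have htc : t * c ≤ ε := by
    have h1 : t ≤ ε/(c+1) := min_le_right _ _
    have h2 : t * c ≤ (ε/(c+1)) * c := by
      apply mul_le_mul_of_nonneg_right h1 hc0
    have h3 : (ε/(c+1)) * c ≤ ε := by
      rw [div_mul_eq_mul_div, div_le_iff₀ (by linarith : (0:ℝ) < c + 1)]
      nlinarith
    linarith
  have hexp : μ/2*(1-t)*‖y - x‖^2 = c - t * c := by rw [hc]; ring
  rw [hexp] at hk
  have : μ / 2 * ‖y - x‖ ^ 2 = c := hc.symm
  linarith

lemma subdiff_nonempty {Ω : Set (Euc n)} {w : Euc n → ℝ}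
    (hΩ_open : IsOpen Ω) (hconv : ConvexOn ℝ Ω w) (hw_cont : ContinuousOn w Ω)
    {x : Euc n} (hx : x ∈ Ω) : (subdiff n Ω w x).Nonempty := by
  set s : Set (Euc n × ℝ) := {yt | yt.1 ∈ Ω ∧ w yt.1 < yt.2} with hs
  have hs_open : IsOpen s := by
    rw [isOpen_iff_mem_nhds]
    rintro ⟨y, t⟩ ⟨hy, hyt⟩
    have hwc : ContinuousAt w y := hw_cont.continuousAt (hΩ_open.mem_nhds hy)
    have hF : ContinuousAt (fun z : Euc n × ℝ => z.2 - w z.1) (y, t) :=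
      (continuous_snd.continuousAt).sub (hwc.comp continuous_fst.continuousAt)
    have h1 : {z : Euc n × ℝ | 0 < z.2 - w z.1} ∈ 𝓝 ((y, t) : Euc n × ℝ) :=
      hF.preimage_mem_nhds (Ioi_mem_nhds (by simpa using sub_pos.2 hyt))
    have h2 : (Ω ×ˢ (univ : Set ℝ)) ∈ 𝓝 ((y, t) : Euc n × ℝ) :=
      prod_mem_nhds (hΩ_open.mem_nhds hy) univ_mem
    filter_upwards [h1, h2] with z hz1 hz2
    exact ⟨hz2.1, by simpa [sub_pos] using hz1⟩
  have hs_conv : Convex ℝ s := by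
    rintro ⟨y₁, t₁⟩ ⟨hy₁, ht₁⟩ ⟨y₂, t₂⟩ ⟨hy₂, ht₂⟩ a b ha hb hab
    refine ⟨hconv.1 hy₁ hy₂ ha hb hab, ?_⟩
    have hw' := hconv.2 hy₁ hy₂ ha hb hab
    simp only [smul_eq_mul] at hw' ⊢
    have hstrict : a * w y₁ + b * w y₂ < a * t₁ + b * t₂ := by
      rcases eq_or_lt_of_le ha with h0 | h0
      · have hb1 : b = 1 := by linarith
        simp [← h0, hb1]; linarith
      · have h1 : a * w y₁ < a * t₁ := mul_lt_mul_of_pos_left ht₁ h0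
        have h2 : b * w y₂ ≤ b * t₂ := mul_le_mul_of_nonneg_left ht₂.le hb
        linarith
    calc w (a • y₁ + b • y₂) ≤ a * w y₁ + b * w y₂ := hw'
      _ < a * t₁ + b * t₂ := hstrict
  have hxs : ((x, w x) : Euc n × ℝ) ∉ s := fun h => lt_irrefl _ h.2
  obtain ⟨f, hf⟩ := geometric_hahn_banach_open_point hs_conv hs_open hxs
  set c : ℝ := f (0, 1) with hcdef
  have hc : c < 0 := by
    have h1 := hf (x, w x + 1) ⟨hx, (by linarith : w x < w x + 1)⟩
    have he : ((x, w x + 1) : Euc n × ℝ) = (x, w x) + (0, 1) := by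
      simp [Prod.ext_iff]
    rw [he, map_add] at h1
    linarith
  have hfL : ∀ (y : Euc n) (t : ℝ), f (y, t) = f (y, 0) + t * c := by
    intro y t
    have he : ((y, t) : Euc n × ℝ) = (y, 0) + t • ((0 : Euc n), (1:ℝ)) := by
      simp [Prod.ext_iff]
    rw [he, map_add, ContinuousLinearMap.map_smul]
    simp only [smul_eq_mul, hcdef]
  have hkey : ∀ y ∈ Ω, f (y, 0) + w y * c ≤ f (x, 0) + w x * c := by
    intro y hy
    refine le_of_forall_pos_le_add fun ε hε => ?_
    have hδ : 0 < ε / (-c) := div_pos hε (by linarith)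
    have h1 := hf (y, w y + ε / (-c)) ⟨hy, (by linarith : w y < w y + ε / (-c))⟩
    rw [hfL y (w y + ε / (-c))] at h1
    rw [hfL x (w x)] at h1
    have hcne : c ≠ 0 := ne_of_lt hc
    have h3 : ε / (-c) * c = -ε := by
      rw [div_mul_eq_mul_div, div_neg, mul_div_assoc, div_self hcne, mul_one]
    have he2 : (w y + ε / (-c)) * c = w y * c - ε := by
      rw [add_mul, h3]; ring
    rw [he2] at h1
    linarith
  set L : Euc n →L[ℝ] ℝ := f.comp (ContinuousLinearMap.inl ℝ (Euc n) ℝ) with hLdef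
  have hLf : ∀ y : Euc n, L y = f (y, 0) := fun y => rfl
  refine ⟨(InnerProductSpace.toDual ℝ (Euc n)).symm ((-c)⁻¹ • L), ?_⟩
  simp only [subdiff, Set.mem_setOf_eq]
  intro y hy
  have hi : ⟪(InnerProductSpace.toDual ℝ (Euc n)).symm ((-c)⁻¹ • L), y - x⟫
      = (-c)⁻¹ * (L y - L x) := by
    rw [InnerProductSpace.toDual_symm_apply]
    simp only [ContinuousLinearMap.smul_apply, smul_eq_mul, map_sub]
    ring
  rw [hi]
  have h1 := hkey y hy
  rw [← hLf, ← hLf] at h1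
  have hc' : (0:ℝ) < -c := by linarith
  have h2 : (-c)⁻¹ * (L y - L x) ≤ w y - w x := by
    rw [inv_mul_le_iff₀ hc']
    nlinarith [h1]
  linarith

lemma subgrad_bound {Ω : Set (Euc n)} {w : Euc n → ℝ}
    (hΩ_open : IsOpen Ω) (hw_cont : ContinuousOn w Ω)
    {x₀ : Euc n} (hx₀ : x₀ ∈ Ω) :
    ∃ r > 0, closedBall x₀ r ⊆ Ω ∧ ∃ M : ℝ,
      ∀ x ∈ closedBall x₀ (r/2), ∀ p ∈ subdiff n Ω w x, ‖p‖ ≤ M := by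
  obtain ⟨r, hr0, hrΩ⟩ : ∃ r > 0, closedBall x₀ r ⊆ Ω :=
    (nhds_basis_closedBall.mem_iff).1 (hΩ_open.mem_nhds hx₀)
  obtain ⟨M₀, hM₀⟩ := (isCompact_closedBall x₀ r).exists_bound_of_continuousOn
    (hw_cont.mono hrΩ)
  have hM₀0 : 0 ≤ M₀ := le_trans (norm_nonneg _) (hM₀ x₀ (mem_closedBall_self hr0.le))
  refine ⟨r, hr0, hrΩ, 4 * M₀ / r, ?_⟩
  intro x hx p hp
  simp only [subdiff, Set.mem_setOf_eq] at hp
  rcases eq_or_ne p 0 with rfl | hp0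
  · simp; positivity
  · have hpn : (0:ℝ) < ‖p‖ := norm_pos_iff.2 hp0
    set y : Euc n := x + (r/2) • (‖p‖⁻¹ • p) with hydef
    have hyx : ‖y - x‖ = r/2 := by
      simp only [hydef, add_sub_cancel_left]
      rw [norm_smul, norm_smul]
      simp [abs_of_nonneg hr0.le, abs_of_nonneg (inv_nonneg.2 (norm_nonneg p)),
        inv_mul_cancel₀ (ne_of_gt hpn)]
    have hyK : y ∈ closedBall x₀ r := by
      rw [mem_closedBall, dist_eq_norm]
      have : y - x₀ = (y - x) + (x - x₀) := by abel
      rw [this]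
      have hxx₀ : ‖x - x₀‖ ≤ r/2 := by
        rw [mem_closedBall, dist_eq_norm] at hx; exact hx
      calc ‖(y - x) + (x - x₀)‖ ≤ ‖y - x‖ + ‖x - x₀‖ := norm_add_le _ _
        _ ≤ r/2 + r/2 := by rw [hyx]; linarith
        _ = r := by ring
    have hxK : x ∈ closedBall x₀ r := by
      rw [mem_closedBall] at hx ⊢; linarith [hx]
    have h1 := hp y (hrΩ hyK)
    have hinner : ⟪p, y - x⟫ = r/2 * ‖p‖ := by
      simp only [hydef, add_sub_cancel_left]
      rw [real_inner_smul_right, real_inner_smul_right, real_inner_self_eq_norm_sq]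
      field_simp
    rw [hinner] at h1
    have hb1 : |w y| ≤ M₀ := by simpa [Real.norm_eq_abs] using hM₀ y hyK
    have hb2 : |w x| ≤ M₀ := by simpa [Real.norm_eq_abs] using hM₀ x hxK
    rw [le_div_iff₀ hr0]
    nlinarith [abs_le.1 hb1, abs_le.1 hb2]

lemma subdiff_closed_limit {Ω : Set (Euc n)} {w : Euc n → ℝ}
    (hΩ_open : IsOpen Ω) (hw_cont : ContinuousOn w Ω)
    {x₀ p : Euc n} (hx₀ : x₀ ∈ Ω) {xk pk : ℕ → Euc n}
    (_hxk : ∀ k, xk k ∈ Ω) (hpk : ∀ k, pk k ∈ subdiff n Ω w (xk k))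
    (hxlim : Tendsto xk atTop (𝓝 x₀)) (hplim : Tendsto pk atTop (𝓝 p)) :
    p ∈ subdiff n Ω w x₀ := by
  simp only [subdiff, Set.mem_setOf_eq] at hpk ⊢
  intro y hy
  have hw : Tendsto (fun k => w (xk k)) atTop (𝓝 (w x₀)) :=
    ((hw_cont.continuousAt (hΩ_open.mem_nhds hx₀)).tendsto).comp hxlim
  have hi : Tendsto (fun k => w (xk k) + ⟪pk k, y - xk k⟫) atTop
      (𝓝 (w x₀ + ⟪p, y - x₀⟫)) :=
    hw.add (hplim.inner (tendsto_const_nhds.sub hxlim))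
  exact le_of_tendsto hi (Eventually.of_forall fun k => hpk k y hy)

lemma mem_image_of_near {Ω : Set (Euc n)} {w : Euc n → ℝ} {μ : ℝ} (hμ : 0 < μ)
    (hΩ_convex : Convex ℝ Ω) (hw_cont : ContinuousOn w Ω)
    (hw_unif_convex : ConvexOn ℝ Ω (fun x => w x - μ / 2 * ‖x‖ ^ 2))
    {x₀ p q : Euc n} {r : ℝ} (hr : 0 < r) (hball : closedBall x₀ r ⊆ Ω)
    (hp : p ∈ subdiff n Ω w x₀) (hq : ‖q - p‖ < μ * r / 2) :
    q ∈ subdiffImage n Ω w := by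
  have hx₀ : x₀ ∈ Ω := hball (mem_closedBall_self hr.le)
  have hwc : ConvexOn ℝ Ω w := convexOn_of_unif hμ hΩ_convex hw_unif_convex
  set f : Euc n → ℝ := fun y => w y - ⟪q, y⟫ with hf
  have hfc : ContinuousOn f (closedBall x₀ r) := by
    apply ContinuousOn.sub (hw_cont.mono hball)
    exact (Continuous.inner continuous_const continuous_id).continuousOn
  obtain ⟨z, hzK, hzmin⟩ := (isCompact_closedBall x₀ r).exists_isMinOn
    ⟨x₀, mem_closedBall_self hr.le⟩ hfc
  have hzΩ : z ∈ Ω := hball hzK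
  have hmin : ∀ y ∈ closedBall x₀ r, f z ≤ f y := fun y hy => hzmin hy
  have hd : ‖z - x₀‖ < r := by
    have h1 := strong_ineq hμ hΩ_convex hw_unif_convex hx₀ hp hzΩ
    have h2 : f z ≤ f x₀ := hmin x₀ (mem_closedBall_self hr.le)
    simp only [hf] at h2
    have h3 : ⟪q, z⟫ - ⟪q, x₀⟫ = ⟪q, z - x₀⟫ := (inner_sub_right q z x₀).symm
    have h4 : ⟪p, z - x₀⟫ - ⟪q, z - x₀⟫ = ⟪p - q, z - x₀⟫ :=
      (inner_sub_left p q (z - x₀)).symm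
    have h5 : |⟪p - q, z - x₀⟫| ≤ ‖p - q‖ * ‖z - x₀‖ := abs_real_inner_le_norm _ _
    have h6 : ‖p - q‖ = ‖q - p‖ := norm_sub_rev p q
    set d := ‖z - x₀‖ with hddef
    have hd0 : 0 ≤ d := norm_nonneg _
    rcases eq_or_lt_of_le hd0 with h0 | h0
    · rw [← h0]; exact hr
    · by_contra hge
      push_neg at hge
      have hA : μ/2 * d^2 ≤ ‖p - q‖ * d := by
        have h5' := (abs_le.1 h5).1
        linarith
      have hB : ‖p - q‖ * d < μ * r / 2 * d := by
        rw [h6]; exact mul_lt_mul_of_pos_right hq h0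
      have hC : μ/2 * (r * d) ≤ μ/2 * (d * d) := by
        apply mul_le_mul_of_nonneg_left _ (by positivity)
        exact mul_le_mul_of_nonneg_right hge hd0
      nlinarith [hA, hB, hC]
  refine Set.mem_biUnion hzΩ ?_
  simp only [subdiff, Set.mem_setOf_eq]
  intro y hy
  have hgoal : ∀ y' ∈ Ω, f z ≤ f y' → w z + ⟪q, y' - z⟫ ≤ w y' := by
    intro y' _ hle
    simp only [hf] at hle
    have : ⟪q, y' - z⟫ = ⟪q, y'⟫ - ⟪q, z⟫ := inner_sub_right q y' z
    linarith
  by_cases hyK : y ∈ closedBall x₀ r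
  · exact hgoal y hy (hmin y hyK)
  · have hyfar : r < ‖y - x₀‖ := by
      rw [mem_closedBall, dist_eq_norm, not_le] at hyK
      exact hyK
    have hyz0 : 0 < ‖y - z‖ := by
      have htri : ‖y - x₀‖ ≤ ‖y - z‖ + ‖z - x₀‖ := by
        have : y - x₀ = (y - z) + (z - x₀) := by abel
        rw [this]; exact norm_add_le _ _
      linarith
    have hrd : 0 < r - ‖z - x₀‖ := by linarith
    set s : ℝ := (r - ‖z - x₀‖) / ‖y - z‖ with hsdef
    have hs0 : 0 < s := div_pos hrd hyz0
    have hs1 : s < 1 := by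
      rw [hsdef, div_lt_one hyz0]
      have htri : ‖y - x₀‖ ≤ ‖y - z‖ + ‖z - x₀‖ := by
        have : y - x₀ = (y - z) + (z - x₀) := by abel
        rw [this]; exact norm_add_le _ _
      linarith
    set zz : Euc n := (1 - s) • z + s • y with hzzdef
    have hzzΩ : zz ∈ Ω := hΩ_convex hzΩ hy (by linarith) hs0.le (by ring)
    have hzzK : zz ∈ closedBall x₀ r := by
      rw [mem_closedBall, dist_eq_norm]
      have he : zz - x₀ = (z - x₀) + s • (y - z) := by
        simp only [hzzdef]; module
      rw [he]
      have hsn : ‖s • (y - z)‖ = s * ‖y - z‖ := by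
        rw [norm_smul, Real.norm_eq_abs, abs_of_pos hs0]
      have hsy : s * ‖y - z‖ = r - ‖z - x₀‖ := by
        rw [hsdef, div_mul_cancel₀ _ (ne_of_gt hyz0)]
      calc ‖(z - x₀) + s • (y - z)‖ ≤ ‖z - x₀‖ + ‖s • (y - z)‖ := norm_add_le _ _
        _ = r := by rw [hsn, hsy]; ring
    have h6 : f z ≤ f zz := hmin zz hzzK
    have hcvf : f zz ≤ (1 - s) * f z + s * f y := by
      have hwcv := hwc.2 hzΩ hy (by linarith : (0:ℝ) ≤ 1 - s) hs0.le (by ring)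
      simp only [smul_eq_mul] at hwcv
      have hiz : ⟪q, (1 - s) • z + s • y⟫ = (1 - s) * ⟪q, z⟫ + s * ⟪q, y⟫ := by
        rw [inner_add_right, real_inner_smul_right, real_inner_smul_right]
      simp only [hf, hzzdef, hiz]
      linarith [hwcv]
    have hzy : f z ≤ f y := by
      have h7 : s * f z ≤ s * f y := by nlinarith [h6, hcvf]
      exact le_of_mul_le_mul_left h7 hs0
    exact hgoal y hy hzy

end AuxSubdiff

/-- the subdifferential image of a uniformly convex continuous function on an
open convex connected set is open and connected. -/
theorem subdiff_image_open_connected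
    (n : ℕ) (Ω : Set (Euc n)) (hΩ_open : IsOpen Ω) (hΩ_convex : Convex ℝ Ω)
    (hΩ_conn : IsConnected Ω)
    (w : Euc n → ℝ) (hw_cont : ContinuousOn w Ω)
    (μ : ℝ) (hμ : 0 < μ)
    (hw_unif_convex : ConvexOn ℝ Ω (fun x => w x - μ / 2 * ‖x‖ ^ 2)) :
    IsOpen (subdiffImage n Ω w) ∧ IsConnected (subdiffImage n Ω w) := by
  have hwc : ConvexOn ℝ Ω w := convexOn_of_unif hμ hΩ_convex hw_unif_convex
  have himage : ∀ {x : Euc n}, x ∈ Ω → ∀ {p : Euc n}, p ∈ subdiff n Ω w x →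
      p ∈ subdiffImage n Ω w := fun {x} hx {p} hp => Set.mem_biUnion hx hp
  constructor
  · rw [Metric.isOpen_iff]
    intro q hq
    simp only [subdiffImage, Set.mem_iUnion, exists_prop] at hq
    obtain ⟨x, hxΩ, hpq⟩ := hq
    obtain ⟨r, hr0, hball⟩ : ∃ r > 0, closedBall x r ⊆ Ω :=
      (nhds_basis_closedBall.mem_iff).1 (hΩ_open.mem_nhds hxΩ)
    refine ⟨μ * r / 2, by positivity, fun q' hq' => ?_⟩
    rw [mem_ball, dist_eq_norm] at hq'
    exact mem_image_of_near hμ hΩ_convex hw_cont hw_unif_convex hr0 hball hpq hq'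
  · obtain ⟨x₀, hx₀⟩ := hΩ_conn.nonempty
    have hne : (subdiffImage n Ω w).Nonempty := by
      obtain ⟨p, hp⟩ := subdiff_nonempty hΩ_open hwc hw_cont hx₀
      exact ⟨p, himage hx₀ hp⟩
    refine ⟨hne, ?_⟩
    rintro u v hu hv hcov ⟨a, haU, hau⟩ ⟨b, hbU, hbv⟩
    by_contra hemp
    have hdisj : ∀ p ∈ subdiffImage n Ω w, p ∈ u → p ∈ v → False :=
      fun p hp h1 h2 => hemp ⟨p, hp, h1, h2⟩
    have hseg : ∀ x ∈ Ω, (subdiff n Ω w x ∩ u).Nonempty →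
        (subdiff n Ω w x ∩ v).Nonempty → False := by
      rintro x hxΩ ⟨p, hpS, hpu⟩ ⟨q, hqS, hqv⟩
      have hsub : segment ℝ p q ⊆ subdiff n Ω w x :=
        (subdiff_convex x).segment_subset hpS hqS
      obtain ⟨z, hzseg, hzu, hzv⟩ := (convex_segment p q).isPreconnected u v hu hv
        (fun z hz => hcov (himage hxΩ (hsub hz)))
        ⟨p, left_mem_segment ℝ p q, hpu⟩ ⟨q, right_mem_segment ℝ p q, hqv⟩
      exact hdisj z (himage hxΩ (hsub hzseg)) hzu hzv
    have hopen : ∀ u' v' : Set (Euc n), IsOpen u' →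
        subdiffImage n Ω w ⊆ u' ∪ v' →
        (∀ x ∈ Ω, (subdiff n Ω w x ∩ u').Nonempty →
          (subdiff n Ω w x ∩ v').Nonempty → False) →
        IsOpen {x | x ∈ Ω ∧ (subdiff n Ω w x ∩ u').Nonempty} := by
      intro u' v' hu' hcov' hseg'
      rw [isOpen_iff_mem_nhds]
      rintro x ⟨hxΩ, p, hpS, hpu⟩
      by_contra hnot
      obtain ⟨r, hr0, hrΩ, M, hM⟩ := subgrad_bound hΩ_open hw_cont hxΩ
      have hbad : ∀ k : ℕ, ∃ x', dist x' x < min (r/2) (1/(k+1)) ∧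
          ¬(x' ∈ Ω ∧ (subdiff n Ω w x' ∩ u').Nonempty) := by
        intro k
        by_contra hb
        push_neg at hb
        apply hnot
        rw [Metric.mem_nhds_iff]
        refine ⟨min (r/2) (1/(k+1)), lt_min (by positivity) (by positivity), ?_⟩
        intro y hy
        rw [mem_ball] at hy
        exact hb y hy
      choose xk hxk1 hxk2 using hbad
      have hxkd : ∀ k, dist (xk k) x < r/2 := fun k =>
        lt_of_lt_of_le (hxk1 k) (min_le_left _ _)
      have hxkB : ∀ k, xk k ∈ closedBall x (r/2) := fun k =>
        mem_closedBall.2 (le_of_lt (hxkd k))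
      have hxkΩ : ∀ k, xk k ∈ Ω := by
        intro k
        apply hrΩ
        rw [mem_closedBall]
        linarith [hxkd k, hr0]
      have hxknon := fun k => subdiff_nonempty hΩ_open hwc hw_cont (hxkΩ k)
      choose pk hpk using hxknon
      have hpknu : ∀ k, pk k ∉ u' := by
        intro k hk
        exact (hxk2 k) ⟨hxkΩ k, ⟨pk k, hpk k, hk⟩⟩
      have hbound : ∀ k, pk k ∈ closedBall (0 : Euc n) M := by
        intro k
        rw [mem_closedBall_zero_iff]
        exact hM (xk k) (hxkB k) (pk k) (hpk k)
      obtain ⟨pl, _, φ, hφ, hplim⟩ := tendsto_subseq_of_bounded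
        (Metric.isBounded_closedBall (x := (0 : Euc n)) (r := M)) hbound
      have hxlim : Tendsto xk atTop (𝓝 x) := by
        rw [tendsto_iff_dist_tendsto_zero]
        apply squeeze_zero (fun k => dist_nonneg)
          (fun k => (lt_of_lt_of_le (hxk1 k) (min_le_right _ _)).le)
        exact tendsto_one_div_add_atTop_nhds_zero_nat
      have hxφ : Tendsto (fun k => xk (φ k)) atTop (𝓝 x) :=
        hxlim.comp hφ.tendsto_atTop
      have hplS : pl ∈ subdiff n Ω w x :=
        subdiff_closed_limit hΩ_open hw_cont hxΩ (fun k => hxkΩ (φ k))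
          (fun k => hpk (φ k)) hxφ hplim
      have hplu : pl ∉ u' := by
        intro hk
        obtain ⟨k, hkk⟩ := (hplim.eventually_mem (hu'.mem_nhds hk)).exists
        exact hpknu (φ k) hkk
      have hplv : pl ∈ v' := by
        rcases hcov' (himage hxΩ hplS) with h | h
        · exact absurd h hplu
        · exact h
      exact hseg' x hxΩ ⟨p, hpS, hpu⟩ ⟨pl, hplS, hplv⟩
    have hseg2 : ∀ x ∈ Ω, (subdiff n Ω w x ∩ v).Nonempty →
        (subdiff n Ω w x ∩ u).Nonempty → False :=
      fun x hx h1 h2 => hseg x hx h2 h1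
    have hAopen := hopen u v hu hcov hseg
    have hBopen := hopen v u hv
      (fun p hp => (hcov hp).elim Or.inr Or.inl) hseg2
    have hcover : Ω ⊆ {x | x ∈ Ω ∧ (subdiff n Ω w x ∩ u).Nonempty} ∪
        {x | x ∈ Ω ∧ (subdiff n Ω w x ∩ v).Nonempty} := by
      intro x hx
      obtain ⟨p, hp⟩ := subdiff_nonempty hΩ_open hwc hw_cont hx
      rcases hcov (himage hx hp) with h | h
      · exact Or.inl ⟨hx, p, hp, h⟩
      · exact Or.inr ⟨hx, p, hp, h⟩
    simp only [subdiffImage, Set.mem_iUnion, exists_prop] at haU hbU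
    obtain ⟨xa, hxaΩ, haS⟩ := haU
    obtain ⟨xb, hxbΩ, hbS⟩ := hbU
    obtain ⟨z, hzΩ, hzA, hzB⟩ := hΩ_conn.isPreconnected _ _ hAopen hBopen hcover
      ⟨xa, hxaΩ, ⟨hxaΩ, a, haS, hau⟩⟩ ⟨xb, hxbΩ, ⟨hxbΩ, b, hbS, hbv⟩⟩
    exact hseg z hzΩ hzA.2 hzB.2
end

section
/- Let A be a real symmetric n×n matrix such that A + Iₙ is positive definite, and let u(x) = ½⟨Ax, x⟩ on Ω = ℝⁿ. Then: (i) the π/4-rotated potential of u is the quadratic ū(x̄) = ½⟨Āx̄, x̄⟩ with Ā = (A − Iₙ)(A + Iₙ)^{-1}, and Ā is symmetric; (ii) Σᵢ₌₁ⁿ arctan λᵢ(Ā) = Σᵢ₌₁ⁿ arctan λᵢ(A) − nπ/4; (iii) if moreover A is positive semidefinite, then −Iₙ ≤ Ā < Iₙ, i.e. all eigenvalues of Ā lie in [−1, 1). -/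
open Set Metric MeasureTheory Filter
open scoped Topology NNReal RealInnerProductSpace

/-!
Write `N = (A + 1)⁻¹`. Up to the factor `1/√2`, `ũ` is the quadratic form of `A + 1`, so its
Legendre transform is the quadratic form of `√2 N`, and unwinding the rotation gives the quadratic
form of `Ā = 1 - 2N = (A - 1)N`. Thus `Ā = f(A)` in the functional calculus of `A`, with
`f t = (t - 1)/(t + 1)`: its eigenvalues are the `f(λᵢ)` (with multiplicity, as roots of the
characteristic polynomial), and `arctan f(λ) = arctan λ - π/4` for `λ > -1` since
`arctan 1 = π/4`. For `λ ≥ 0` we have `f(λ) + 1 ≥ 0`, while `1 - Ā = 2N` is positive definite.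
-/

open Matrix

lemma Matrix.sub_one_mul_inv_add_one {ι α : Type*} [Fintype ι] [DecidableEq ι] [CommRing α]
    {A : Matrix ι ι α} (h : IsUnit (A + 1).det) : (A - 1) * (A + 1)⁻¹ = 1 - 2 • (A + 1)⁻¹ := by
  rw [show A - 1 = A + 1 - 2 • 1 by rw [two_smul]; abel, sub_mul, mul_nonsing_inv _ h,
    smul_mul_assoc, one_mul]

section FunctionalCalculus

variable {ι : Type*} [Fintype ι] [DecidableEq ι]

open Polynomial in
lemma Matrix.IsHermitian.sum_comp_eigenvalues_cfc {𝕜 : Type*} [RCLike 𝕜] {A : Matrix ι ι 𝕜}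
    (hA : A.IsHermitian) (f : ℝ → ℝ) (hfA : (cfc f A).IsHermitian) (g : ℝ → ℝ) :
    ∑ i, g (hfA.eigenvalues i) = ∑ i, g (f (hA.eigenvalues i)) := by
  have hprod : ∏ i, (X - C ((f (hA.eigenvalues i) : ℝ) : 𝕜))
      = ((Finset.univ.val.map (f ∘ hA.eigenvalues)).map (RCLike.ofReal : ℝ → 𝕜)
          |>.map fun a => X - C a).prod := by
    simp only [Multiset.map_map]; rfl
  have hroots := hfA.roots_charpoly_eq_eigenvalues
  rw [hA.charpoly_cfc_eq f, hprod, roots_multiset_prod_X_sub_C] at hroots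
  have heq : Finset.univ.val.map (f ∘ hA.eigenvalues) = Finset.univ.val.map hfA.eigenvalues :=
    Multiset.map_injective RCLike.ofReal_injective (by simpa only [Multiset.map_map] using hroots)
  calc ∑ i, g (hfA.eigenvalues i) = ((Finset.univ.val.map hfA.eigenvalues).map g).sum := by
        rw [Multiset.map_map]; rfl
    _ = ((Finset.univ.val.map (f ∘ hA.eigenvalues)).map g).sum := by rw [heq]
    _ = ∑ i, g (f (hA.eigenvalues i)) := by rw [Multiset.map_map]; rfl

open scoped MatrixOrder in
lemma Matrix.spectrum_subset_Ioi_neg_one_of_posDef_add_one {A : Matrix ι ι ℝ}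
    (hA : (A + 1).PosDef) : spectrum ℝ A ⊆ Set.Ioi (-1) := by
  intro x hx
  have : x + 1 ∈ spectrum ℝ (A + 1) := by
    rw [add_comm A, ← map_one (algebraMap ℝ (Matrix ι ι ℝ))]
    exact spectrum.add_mem_add_iff.mpr hx
  simpa [← sub_pos] using hA.isStrictlyPositive.spectrum_pos this

open scoped MatrixOrder in
lemma Matrix.posSemidef_cfc {A : Matrix ι ι ℝ} {f : ℝ → ℝ}
    (hf : ∀ t ∈ spectrum ℝ A, 0 ≤ f t) : (cfc f A).PosSemidef :=
  (cfc_nonneg hf).posSemidef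

lemma Matrix.cfc_sub_one_div_add_one {A : Matrix ι ι ℝ} (hA : A.IsHermitian)
    (h : IsUnit (A + 1)) : cfc (fun t : ℝ => (t - 1) / (t + 1)) A = (A - 1) * (A + 1)⁻¹ := by
  have hσ : ∀ t ∈ spectrum ℝ A, t + 1 ≠ 0 := by
    intro t ht ht'
    rw [spectrum.mem_iff, show t = -1 by linarith, map_neg, map_one, ← neg_add', add_comm] at ht
    exact ht h.neg
  have hA' : IsSelfAdjoint A := hA
  have hcont (f : ℝ → ℝ) : ContinuousOn f (spectrum ℝ A) := A.finite_spectrum.continuousOn f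
  have hmul : cfc (fun t : ℝ => (t - 1) / (t + 1)) A * (A + 1) = A - 1 := by
    calc cfc (fun t : ℝ => (t - 1) / (t + 1)) A * (A + 1)
        = cfc (fun t => (t - 1) / (t + 1) * (t + 1)) A := by
          rw [cfc_mul _ _ A (hcont _) (hcont _), cfc_add_const (1 : ℝ) (fun t => t) A (hcont _) hA',
            cfc_id' ℝ A hA', map_one]
      _ = cfc (fun t => t - 1) A := cfc_congr fun t ht => div_mul_cancel₀ _ (hσ t ht)
      _ = A - 1 := by
          rw [cfc_sub _ _ A (hcont _) (hcont _), cfc_id' ℝ A hA', cfc_const_one ℝ A hA']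
  rw [← hmul, mul_nonsing_inv_cancel_right _ _ ((isUnit_iff_isUnit_det _).mp h)]

end FunctionalCalculus

section QuadraticForm

variable {ι : Type*} [Fintype ι]

lemma Matrix.sum_sum_mul_mul_eq_dotProduct_mulVec (M : Matrix ι ι ℝ) (x : ι → ℝ) :
    ∑ i, ∑ j, M i j * x i * x j = x ⬝ᵥ M *ᵥ x := by
  simp only [dotProduct, mulVec, Finset.mul_sum]
  exact Finset.sum_congr rfl fun i _ => Finset.sum_congr rfl fun j _ => by ring

lemma Matrix.IsSymm.dotProduct_mulVec_comm {M : Matrix ι ι ℝ} (hM : M.IsSymm) (x y : ι → ℝ) :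
    x ⬝ᵥ M *ᵥ y = y ⬝ᵥ M *ᵥ x := by
  rw [dotProduct_mulVec, ← mulVec_transpose, hM.eq, dotProduct_comm]

lemma Matrix.PosDef.isGreatest_dotProduct_sub_half_quadForm [DecidableEq ι] {M : Matrix ι ι ℝ}
    (hM : M.PosDef) (q : ι → ℝ) :
    IsGreatest (Set.range fun y => y ⬝ᵥ q - (1/2) * (y ⬝ᵥ M *ᵥ y))
      ((1/2) * (q ⬝ᵥ M⁻¹ *ᵥ q)) := by
  set w := M⁻¹ *ᵥ q
  have hMw : M *ᵥ w = q := by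
    rw [mulVec_mulVec, mul_nonsing_inv _ ((isUnit_iff_isUnit_det M).mp hM.isUnit), one_mulVec]
  have hsymm : M.IsSymm := isHermitian_iff_isSymm.mp hM.isHermitian
  have hsquare (y : ι → ℝ) : y ⬝ᵥ q - (1/2) * (y ⬝ᵥ M *ᵥ y)
      = (1/2) * (q ⬝ᵥ w) - (1/2) * ((y - w) ⬝ᵥ M *ᵥ (y - w)) := by
    rw [mulVec_sub, dotProduct_sub, sub_dotProduct, sub_dotProduct, hMw,
      hsymm.dotProduct_mulVec_comm w y, hMw, dotProduct_comm w q]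
    ring
  refine ⟨⟨w, by simp only [hsquare, sub_self, mulVec_zero, dotProduct_zero]; ring⟩, ?_⟩
  rintro _ ⟨y, rfl⟩
  have := hM.posSemidef.dotProduct_mulVec_nonneg (y - w)
  rw [star_trivial] at this
  linarith [hsquare y]

end QuadraticForm

lemma Real.arctan_sub_one_div_add_one {x : ℝ} (hx : -1 < x) :
    Real.arctan ((x - 1) / (x + 1)) = Real.arctan x - Real.pi / 4 := by
  have hlt : (x - 1) / (x + 1) * 1 < 1 := by
    rw [mul_one, div_lt_one (by linarith)]; linarith
  have hx1 : x + 1 ≠ 0 := by linarith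
  have hsum := Real.arctan_add hlt
  rw [Real.arctan_one, show ((x - 1) / (x + 1) + 1) / (1 - (x - 1) / (x + 1) * 1) = x by
    field_simp; ring] at hsum
  linarith

lemma EuclideanSpace.real_inner_eq_dotProduct {n : ℕ} (x y : Euc n) :
    ⟪x, y⟫ = x.ofLp ⬝ᵥ y.ofLp := by
  rw [EuclideanSpace.inner_eq_star_dotProduct, star_trivial, dotProduct_comm]

lemma legendreTransform_tildePot_quadratic {n : ℕ} {A : Matrix (Fin n) (Fin n) ℝ}
    (hA : (A + 1).PosDef) (p : Euc n) :
    legendreTransform n Set.univ (tildePot n fun x => (1/2) * ∑ i, ∑ j, A i j * x i * x j) p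
      = (Real.sqrt 2)⁻¹ * (p.ofLp ⬝ᵥ (A + 1)⁻¹ *ᵥ p.ofLp) := by
  set M : Matrix (Fin n) (Fin n) ℝ := (Real.sqrt 2)⁻¹ • (A + 1)
  have hM : M.PosDef := hA.smul (by positivity)
  have hobj : (fun x : Euc n =>
        ⟪x, p⟫ - tildePot n (fun x => (1/2) * ∑ i, ∑ j, A i j * x i * x j) x)
      = (fun y => y ⬝ᵥ p.ofLp - (1/2) * (y ⬝ᵥ M *ᵥ y)) ∘ WithLp.ofLp := by
    ext x
    simp only [tildePot, Function.comp_apply, EuclideanSpace.real_inner_eq_dotProduct,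
      ← real_inner_self_eq_norm_sq, sum_sum_mul_mul_eq_dotProduct_mulVec, M, smul_mulVec,
      add_mulVec, one_mulVec, dotProduct_smul, dotProduct_add, smul_eq_mul]
    ring
  have hMinv : M⁻¹ = Real.sqrt 2 • (A + 1)⁻¹ := inv_eq_left_inv <| by
    rw [smul_mul_smul_comm, mul_inv_cancel₀ (by positivity), one_smul,
      nonsing_inv_mul _ ((isUnit_iff_isUnit_det _).mp hA.isUnit)]
  rw [legendreTransform, Set.image_univ, hobj, (WithLp.ofLp_surjective 2).range_comp,
    (hM.isGreatest_dotProduct_sub_half_quadForm p.ofLp).csSup_eq, hMinv, smul_mulVec,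
    dotProduct_smul, smul_eq_mul]
  field_simp
  rw [Real.sq_sqrt zero_le_two]

lemma rotPotential_quadratic {n : ℕ} {A : Matrix (Fin n) (Fin n) ℝ} (hA : (A + 1).PosDef)
    (p : Euc n) :
    rotPotential n Set.univ (fun x => (1/2) * ∑ i, ∑ j, A i j * x i * x j) p =
      (1/2) * ∑ i, ∑ j, ((A - 1) * (A + 1)⁻¹) i j * p i * p j := by
  rw [rotPotential, legendreTransform_tildePot_quadratic hA, sum_sum_mul_mul_eq_dotProduct_mulVec,
    sub_one_mul_inv_add_one ((isUnit_iff_isUnit_det _).mp hA.isUnit), sub_mulVec, one_mulVec,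
    smul_mulVec, dotProduct_sub, dotProduct_smul, ← real_inner_self_eq_norm_sq,
    EuclideanSpace.real_inner_eq_dotProduct, two_nsmul]
  field_simp
  ring

lemma lagrangianAngle_cfc {n : ℕ} {A : Matrix (Fin n) (Fin n) ℝ} (hA : A.IsHermitian)
    (f : ℝ → ℝ) : lagrangianAngle n (cfc f A) = ∑ i, Real.arctan (f (hA.eigenvalues i)) := by
  have hfA : (cfc f A).IsHermitian := cfc_predicate f A
  rw [lagrangianAngle, dif_pos hfA]
  exact hA.sum_comp_eigenvalues_cfc f hfA Real.arctan

theorem rotation_of_quadratic_general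
    (n : ℕ) (A : Matrix (Fin n) (Fin n) ℝ)
    (hA_pos : (A + 1).PosDef) :
    (∀ p : Euc n,
      rotPotential n Set.univ (fun x => (1/2) * ∑ i, ∑ j, A i j * x i * x j) p =
        (1/2) * ∑ i, ∑ j, ((A - 1) * (A + 1)⁻¹) i j * p i * p j) ∧
    ((A - 1) * (A + 1)⁻¹).IsSymm ∧
    lagrangianAngle n ((A - 1) * (A + 1)⁻¹) = lagrangianAngle n A - (n : ℝ) * Real.pi / 4 ∧
    (A.PosSemidef →
      ((A - 1) * (A + 1)⁻¹ + 1).PosSemidef ∧ (1 - (A - 1) * (A + 1)⁻¹).PosDef) := by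
  have hA : A.IsHermitian := by simpa using hA_pos.isHermitian.sub isHermitian_one
  have hcayley := cfc_sub_one_div_add_one hA hA_pos.isUnit
  refine ⟨rotPotential_quadratic hA_pos, ?_, ?_, fun hA_psd => ⟨?_, ?_⟩⟩
  · rw [← hcayley]
    exact isHermitian_iff_isSymm.mp (cfc_predicate _ A)
  · have hσ := spectrum_subset_Ioi_neg_one_of_posDef_add_one hA_pos
    rw [← hcayley, lagrangianAngle_cfc hA, lagrangianAngle, dif_pos hA]
    simp only [Real.arctan_sub_one_div_add_one (hσ (hA.eigenvalues_mem_spectrum_real _)),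
      Finset.sum_sub_distrib, Finset.sum_const, Finset.card_univ, Fintype.card_fin, nsmul_eq_mul]
    ring
  · have hσ := (posSemidef_iff_isHermitian_and_spectrum_nonneg.mp hA_psd).2
    have hshift := cfc_add_const (1 : ℝ) (fun t : ℝ => (t - 1) / (t + 1)) A
      (A.finite_spectrum.continuousOn _) (hA : IsSelfAdjoint A)
    rw [map_one] at hshift
    rw [← hcayley, ← hshift]
    refine posSemidef_cfc fun t ht => ?_
    have ht : 0 ≤ t := hσ ht
    rw [div_add_one (by linarith)]
    exact div_nonneg (by linarith) (by linarith)
  · rw [sub_one_mul_inv_add_one ((isUnit_iff_isUnit_det _).mp hA_pos.isUnit), sub_sub_cancel,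
      two_nsmul]
    exact hA_pos.inv.add hA_pos.inv

/-- the π/4-rotation of the quadratic `½⟨Ax,x⟩` (with `A + Iₙ` positive
definite) is the quadratic with symmetric matrix `Ā = (A − Iₙ)(A + Iₙ)⁻¹`; the Lagrangian
angle drops by `nπ/4`; and if `A` is positive semidefinite then `−Iₙ ≤ Ā < Iₙ`. -/
theorem rotation_of_quadratic
    (n : ℕ) (A : Matrix (Fin n) (Fin n) ℝ) (hA_symm : A.IsSymm)
    (hA_pos : (A + 1).PosDef) :
    (∀ p : Euc n,
      rotPotential n Set.univ (fun x => (1/2) * ∑ i, ∑ j, A i j * x i * x j) p =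
        (1/2) * ∑ i, ∑ j, ((A - 1) * (A + 1)⁻¹) i j * p i * p j) ∧
    ((A - 1) * (A + 1)⁻¹).IsSymm ∧
    lagrangianAngle n ((A - 1) * (A + 1)⁻¹) = lagrangianAngle n A - (n : ℝ) * Real.pi / 4 ∧
    (A.PosSemidef →
      ((A - 1) * (A + 1)⁻¹ + 1).PosSemidef ∧ (1 - (A - 1) * (A + 1)⁻¹).PosDef) :=
  rotation_of_quadratic_general n A hA_pos
end

section
/- The function F(A) = Σᵢ₌₁ⁿ arctan λᵢ(A) is concave on the cone of positive semidefinite real symmetric n×n matrices: for all positive semidefinite symmetric A, B and all t ∈ [0,1], F(tA + (1−t)B) ≥ t·F(A) + (1−t)·F(B). -/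
open Set Metric MeasureTheory Filter
open scoped Topology NNReal RealInnerProductSpace

/-
Write `C = tA + (1-t)B` and let `(wᵢ)` be an orthonormal eigenbasis of `C`, so that
`λᵢ(C) = t⟨wᵢ, Awᵢ⟩ + (1-t)⟨wᵢ, Bwᵢ⟩`. Since `arctan` is concave on `[0, ∞)`,
`arctan λᵢ(C) ≥ t arctan⟨wᵢ, Awᵢ⟩ + (1-t) arctan⟨wᵢ, Bwᵢ⟩`, and it remains to compare the
diagonal of `A` in the basis `(wᵢ)` with its eigenvalues: for a concave `f` and any
orthonormal basis, `∑ f(λⱼ(A)) ≤ ∑ f(⟨wᵢ, Awᵢ⟩)` (Peierls). Indeed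
`⟨wᵢ, Awᵢ⟩ = ∑ⱼ ⟨vⱼ, wᵢ⟩² λⱼ(A)` for an eigenbasis `(vⱼ)` of `A`, the weights `⟨vⱼ, wᵢ⟩²` form
a doubly stochastic matrix, and Jensen's inequality applies row by row.
-/

open Matrix
open scoped RealInnerProductSpace

lemma Real.concaveOn_arctan_Ici : ConcaveOn ℝ (Ici 0) Real.arctan := by
  refine AntitoneOn.concaveOn_of_deriv (convex_Ici 0) Real.continuous_arctan.continuousOn
    Real.differentiable_arctan.differentiableOn ?_
  rw [interior_Ici, Real.deriv_arctan]
  intro x hx y _ hxy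
  have : 0 ≤ x := le_of_lt hx
  dsimp only
  gcongr

namespace Matrix

variable {n : Type*} [Fintype n] [DecidableEq n] {M : Matrix n n ℝ}

lemma IsHermitian.toEuclideanLin_eigenvectorBasis (hM : M.IsHermitian) (j : n) :
    toEuclideanLin M (hM.eigenvectorBasis j) = hM.eigenvalues j • hM.eigenvectorBasis j := by
  ext k
  exact congrFun (hM.mulVec_eigenvectorBasis j) k

lemma IsHermitian.inner_eigenvectorBasis_toEuclideanLin (hM : M.IsHermitian) (j : n) :
    ⟪hM.eigenvectorBasis j, toEuclideanLin M (hM.eigenvectorBasis j)⟫ = hM.eigenvalues j := by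
  rw [hM.toEuclideanLin_eigenvectorBasis, real_inner_smul_right, real_inner_self_eq_norm_sq,
    hM.eigenvectorBasis.orthonormal.1 j, one_pow, mul_one]

lemma IsHermitian.inner_toEuclideanLin_eq_sum (hM : M.IsHermitian) (x : EuclideanSpace ℝ n) :
    ⟪x, toEuclideanLin M x⟫ = ∑ j, ⟪hM.eigenvectorBasis j, x⟫ ^ 2 * hM.eigenvalues j := by
  rw [← hM.eigenvectorBasis.sum_inner_mul_inner x]
  refine Finset.sum_congr rfl fun j _ => ?_
  rw [← isSymmetric_toEuclideanLin_iff.mpr hM, hM.toEuclideanLin_eigenvectorBasis,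
    real_inner_smul_left, real_inner_comm x]
  ring

theorem IsHermitian.sum_map_eigenvalues_le_sum_map_inner {ι : Type*} [Fintype ι] {s : Set ℝ}
    {f : ℝ → ℝ} (hf : ConcaveOn ℝ s f) (hM : M.IsHermitian) (hs : ∀ j, hM.eigenvalues j ∈ s)
    (w : OrthonormalBasis ι ℝ (EuclideanSpace ℝ n)) :
    ∑ j, f (hM.eigenvalues j) ≤ ∑ i, f ⟪w i, toEuclideanLin M (w i)⟫ := by
  set v := hM.eigenvectorBasis
  have hrow (i : ι) : ∑ j, ⟪v j, w i⟫ ^ 2 = 1 := by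
    rw [v.sum_sq_inner_right, w.orthonormal.1 i, one_pow]
  have hcol (j : n) : ∑ i, ⟪v j, w i⟫ ^ 2 = 1 := by
    rw [w.sum_sq_inner_left, v.orthonormal.1 j, one_pow]
  have jensen (i : ι) :
      ∑ j, ⟪v j, w i⟫ ^ 2 * f (hM.eigenvalues j) ≤ f ⟪w i, toEuclideanLin M (w i)⟫ := by
    rw [hM.inner_toEuclideanLin_eq_sum]
    simpa only [smul_eq_mul] using hf.le_map_sum (fun j _ => sq_nonneg _) (hrow i)
      (fun j _ => hs j)
  calc ∑ j, f (hM.eigenvalues j)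
      = ∑ j, (∑ i, ⟪v j, w i⟫ ^ 2) * f (hM.eigenvalues j) := by simp only [hcol, one_mul]
    _ = ∑ i, ∑ j, ⟪v j, w i⟫ ^ 2 * f (hM.eigenvalues j) := by
        simp only [Finset.sum_mul]
        exact Finset.sum_comm
    _ ≤ _ := Finset.sum_le_sum fun i _ => jensen i

lemma PosSemidef.inner_toEuclideanLin_nonneg (hM : M.PosSemidef) (x : EuclideanSpace ℝ n) :
    0 ≤ ⟪x, toEuclideanLin M x⟫ := by
  simpa [PiLp.inner_apply, dotProduct, mul_comm] using
    hM.dotProduct_mulVec_nonneg x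

theorem PosSemidef.sum_map_eigenvalues_concave {f : ℝ → ℝ} (hf : ConcaveOn ℝ (Ici 0) f)
    {A B : Matrix n n ℝ} (hA : A.PosSemidef) (hB : B.PosSemidef) {a b : ℝ} (ha : 0 ≤ a)
    (hb : 0 ≤ b) (hab : a + b = 1) (hC : (a • A + b • B).IsHermitian) :
    a * ∑ i, f (hA.1.eigenvalues i) + b * ∑ i, f (hB.1.eigenvalues i) ≤
      ∑ i, f (hC.eigenvalues i) := by
  set w := hC.eigenvectorBasis
  have hdiag (i : n) : hC.eigenvalues i =
      a * ⟪w i, toEuclideanLin A (w i)⟫ + b * ⟪w i, toEuclideanLin B (w i)⟫ := by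
    rw [← hC.inner_eigenvectorBasis_toEuclideanLin, map_add, map_smul, map_smul,
      LinearMap.add_apply, LinearMap.smul_apply, LinearMap.smul_apply, inner_add_right,
      real_inner_smul_right, real_inner_smul_right]
  have hpointwise (i : n) :
      a * f ⟪w i, toEuclideanLin A (w i)⟫ + b * f ⟪w i, toEuclideanLin B (w i)⟫ ≤
        f (hC.eigenvalues i) := by
    rw [hdiag]
    exact hf.2 (hA.inner_toEuclideanLin_nonneg _) (hB.inner_toEuclideanLin_nonneg _) ha hb hab
  calc a * ∑ i, f (hA.1.eigenvalues i) + b * ∑ i, f (hB.1.eigenvalues i)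
      ≤ a * ∑ i, f ⟪w i, toEuclideanLin A (w i)⟫ + b * ∑ i, f ⟪w i, toEuclideanLin B (w i)⟫ := by
        gcongr a * ?_ + b * ?_
        · exact hA.1.sum_map_eigenvalues_le_sum_map_inner hf hA.eigenvalues_nonneg w
        · exact hB.1.sum_map_eigenvalues_le_sum_map_inner hf hB.eigenvalues_nonneg w
    _ = ∑ i, (a * f ⟪w i, toEuclideanLin A (w i)⟫ + b * f ⟪w i, toEuclideanLin B (w i)⟫) := by
        rw [Finset.sum_add_distrib, Finset.mul_sum, Finset.mul_sum]
    _ ≤ ∑ i, f (hC.eigenvalues i) := Finset.sum_le_sum fun i _ => hpointwise i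

end Matrix

lemma lagrangianAngle_of_isHermitian {n : ℕ} {A : Matrix (Fin n) (Fin n) ℝ}
    (hA : A.IsHermitian) : lagrangianAngle n A = ∑ i, Real.arctan (hA.eigenvalues i) :=
  dif_pos hA

/-- `F(A) = ∑ arctan λᵢ(A)` is concave on the cone of positive semidefinite
symmetric matrices. -/
theorem lagrangianAngle_concave_on_psd
    (n : ℕ) (A B : Matrix (Fin n) (Fin n) ℝ)
    (hA : A.PosSemidef) (hB : B.PosSemidef)
    (t : ℝ) (ht : t ∈ Set.Icc (0:ℝ) 1) :
    t * lagrangianAngle n A + (1 - t) * lagrangianAngle n B ≤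
      lagrangianAngle n (t • A + (1 - t) • B) := by
  have hC : (t • A + (1 - t) • B).IsHermitian :=
    (hA.1.smul (.all t)).add (hB.1.smul (.all (1 - t)))
  rw [lagrangianAngle_of_isHermitian hA.1, lagrangianAngle_of_isHermitian hB.1,
    lagrangianAngle_of_isHermitian hC]
  exact hA.sum_map_eigenvalues_concave Real.concaveOn_arctan_Ici hB ht.1 (by linarith [ht.2])
    (by ring) hC
end
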